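/- arXiv:math/0702419 — 9 statements merged into one kernel-verified Lean document; each statement's English description precedes it below -/
import Mathlib

section
/- Under Assumption A, for every x = (x₁,x₂) ∈ [0,∞)² and all Borel sets B₁, B₂ ⊆ [0,∞) of strictly positive Lebesgue measure, the two-step transition probability is strictly positive: P[ψ(ψ(x₁,x₂)·η₁², x₁)·η₂² ∈ B₁ and ψ(x₁,x₂)·η₁² ∈ B₂] > 0, where η₁, η₂ are i.i.d. copies of η. (Hence the chain X_t = (ε_t², ε_{t-1}²) is irreducible with respect to Lebesgue measure on [0,∞)².) -/
open MeasureTheory ProbabilityTheory Set Filter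
open scoped ENNReal

/-- Irreducibility: under Assumption A, the two-step transition probability of the
chain `X_t = (ε_t², ε_{t-1}²)` is strictly positive on every Borel rectangle
`B₁ × B₂ ⊆ [0,∞)²` of positive Lebesgue measure. -/
theorem stmt5
    {Ω' : Type*} [MeasurableSpace Ω'] (P : Measure Ω') [IsProbabilityMeasure P]
    (ω α k : ℝ) (hω : 0 < ω) (hα : 0 ≤ α) (hk : 0 ≤ k)
    (ψ : ℝ → ℝ → ℝ)
    (hψ : ∀ x₁ x₂, ψ x₁ x₂ = ω + α * x₁ * (if k * x₂ < x₁ then 1 else 0))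
    (η₁ η₂ : Ω' → ℝ) (hη₁ : Measurable η₁) (hη₂ : Measurable η₂)
    (hindep : IndepFun η₁ η₂ P)
    (f : ℝ → ℝ≥0∞) (hf : Measurable f) (hfpos : ∀ x, 0 ≤ x → 0 < f x)
    (hd₁ : Measure.map (fun z => (η₁ z) ^ 2) P = (volume.restrict (Ici (0 : ℝ))).withDensity f)
    (hd₂ : Measure.map (fun z => (η₂ z) ^ 2) P = (volume.restrict (Ici (0 : ℝ))).withDensity f)
    (hint₁ : Integrable η₁ P) (hint₂ : Integrable η₂ P)
    (hm₁ : ∫ z, η₁ z ∂P = 0) (hm₂ : ∫ z, η₂ z ∂P = 0)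
    (hv₁ : ∫ z, (η₁ z) ^ 2 ∂P = 1) (hv₂ : ∫ z, (η₂ z) ^ 2 ∂P = 1) :
    ∀ x₁ x₂ : ℝ, 0 ≤ x₁ → 0 ≤ x₂ →
      ∀ B₁ B₂ : Set ℝ, MeasurableSet B₁ → MeasurableSet B₂ →
        B₁ ⊆ Ici 0 → B₂ ⊆ Ici 0 → 0 < volume B₁ → 0 < volume B₂ →
        0 < P {z | ψ (ψ x₁ x₂ * (η₁ z) ^ 2) x₁ * (η₂ z) ^ 2 ∈ B₁ ∧
                   ψ x₁ x₂ * (η₁ z) ^ 2 ∈ B₂} := by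
  intro x₁ x₂ hx₁ hx₂ B₁ B₂ hB₁ hB₂ hB₁s hB₂s hB₁v hB₂v
  set μ : Measure ℝ := (volume.restrict (Ici (0 : ℝ))).withDensity f with hμ
  -- μ is positive on measurable subsets of [0,∞) of positive volume
  have key : ∀ A : Set ℝ, MeasurableSet A → A ⊆ Ici 0 → 0 < volume A → 0 < μ A := by
    intro A hA hAs hAv
    rw [hμ, withDensity_apply _ hA, Measure.restrict_restrict hA]
    rw [inter_eq_left.mpr hAs]
    rw [lintegral_pos_iff_support hf, Measure.restrict_apply (measurableSet_support hf)]
    refine lt_of_lt_of_le hAv (measure_mono ?_)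
    intro x hx
    exact ⟨(hfpos x (hAs hx)).ne', hx⟩
  -- positivity of ψ
  have hψpos : ∀ u v : ℝ, 0 ≤ v → 0 < ψ u v := by
    intro u v hv
    rw [hψ]
    have : 0 ≤ α * u * (if k * v < u then 1 else 0) := by
      by_cases h : k * v < u
      · simp only [h, if_pos, mul_one]
        exact mul_nonneg hα (le_of_lt (lt_of_le_of_lt (by positivity) h))
      · simp [h]
    linarith
  set a : ℝ := ψ x₁ x₂ with ha_def
  have ha : 0 < a := hψpos _ _ hx₂
  set c : ℝ → ℝ := fun y => ψ (a * y) x₁ with hc_def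
  have hc : ∀ y, 0 < c y := fun y => hψpos _ _ hx₁
  have hcm : Measurable c := by
    have : c = fun y => ω + α * (a * y) * (if k * x₁ < a * y then 1 else 0) := by
      funext y; rw [hc_def]; exact hψ _ _
    rw [this]
    apply Measurable.add measurable_const
    apply Measurable.mul (by fun_prop)
    exact Measurable.ite (measurableSet_lt measurable_const (by fun_prop))
      measurable_const measurable_const
  set S : Set (ℝ × ℝ) := {p | c p.1 * p.2 ∈ B₁ ∧ a * p.1 ∈ B₂} with hS_def
  have hSm : MeasurableSet S := by
    apply MeasurableSet.inter
    · exact ((hcm.comp measurable_fst).mul measurable_snd) hB₁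
    · exact ((measurable_const.mul measurable_fst)) hB₂
  have hpair : Measurable fun z => ((η₁ z) ^ 2, (η₂ z) ^ 2) := by fun_prop
  have hmap : Measure.map (fun z => ((η₁ z) ^ 2, (η₂ z) ^ 2)) P = μ.prod μ := by
    have hind2 : IndepFun (fun z => (η₁ z) ^ 2) (fun z => (η₂ z) ^ 2) P :=
      hindep.comp (measurable_id.pow_const 2) (measurable_id.pow_const 2)
    rw [(indepFun_iff_map_prod_eq_prod_map_map (by fun_prop) (by fun_prop)).mp hind2,
      hd₁, hd₂]
  have hev : {z | ψ (ψ x₁ x₂ * (η₁ z) ^ 2) x₁ * (η₂ z) ^ 2 ∈ B₁ ∧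
      ψ x₁ x₂ * (η₁ z) ^ 2 ∈ B₂} = (fun z => ((η₁ z) ^ 2, (η₂ z) ^ 2)) ⁻¹' S := rfl
  rw [hev, ← Measure.map_apply hpair hSm, hmap, Measure.prod_apply hSm]
  rw [lintegral_pos_iff_support (measurable_measure_prodMk_left hSm)]
  refine lt_of_lt_of_le (key ((fun y => a * y) ⁻¹' B₂) ((measurable_const_mul a) hB₂)
    ?_ ?_) (measure_mono ?_)
  · intro y hy
    have := hB₂s hy
    simp only [mem_Ici] at this ⊢
    nlinarith
  · rw [Real.volume_preimage_mul_left ha.ne' B₂]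
    exact ENNReal.mul_pos (by simp [ha.ne']) hB₂v.ne'
  · intro y hy
    simp only [Function.mem_support]
    have hyset : Prod.mk y ⁻¹' S = (fun w => c y * w) ⁻¹' B₁ := by
      ext w
      simp only [hS_def, mem_preimage, mem_setOf_eq, Prod.fst, Prod.snd]
      exact ⟨fun h => h.1, fun h => ⟨h, hy⟩⟩
    rw [hyset]
    refine (key _ ((measurable_const_mul (c y)) hB₁) ?_ ?_).ne'
    · intro w hw
      have := hB₁s hw
      simp only [mem_Ici] at this ⊢
      nlinarith [hc y]
    · rw [Real.volume_preimage_mul_left (hc y).ne' B₁]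
      exact ENNReal.mul_pos (by simp [(hc y).ne']) hB₁v.ne'
end

section
/- Under Assumption A, for every Borel rectangle B = B₁ × B₂ ⊆ [0,∞)², the map x ↦ P²(x, B) := P[ψ(ψ(x₁,x₂)·η₁², x₁)·η₂² ∈ B₁ and ψ(x₁,x₂)·η₁² ∈ B₂] (with η₁, η₂ i.i.d. copies of η) is continuous at every point x = (x₁,x₂) of the open region D₁ = {(x₁,x₂) ∈ [0,∞)² : x₁ < k·x₂}. -/
open MeasureTheory ProbabilityTheory Set Filter
open scoped ENNReal

/-- Under Assumption A, for every Borel rectangle `B₁ × B₂ ⊆ [0,∞)²`, the two-step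
transition probability `x ↦ P²(x, B₁ × B₂)` of the chain is continuous (within the
state space `[0,∞)²`) at every point of the region `D₁ = {x₁ < k·x₂}`. -/
theorem stmt6
    {Ω' : Type*} [MeasurableSpace Ω'] (P : Measure Ω') [IsProbabilityMeasure P]
    (ω α k : ℝ) (hω : 0 < ω) (hα : 0 ≤ α) (hk : 0 ≤ k)
    (ψ : ℝ → ℝ → ℝ)
    (hψ : ∀ x₁ x₂, ψ x₁ x₂ = ω + α * x₁ * (if k * x₂ < x₁ then 1 else 0))
    (η₁ η₂ : Ω' → ℝ) (hη₁ : Measurable η₁) (hη₂ : Measurable η₂)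
    (hindep : IndepFun η₁ η₂ P)
    (f : ℝ → ℝ≥0∞) (hf : Measurable f) (hfpos : ∀ x, 0 ≤ x → 0 < f x)
    (hd₁ : Measure.map (fun z => (η₁ z) ^ 2) P = (volume.restrict (Ici (0 : ℝ))).withDensity f)
    (hd₂ : Measure.map (fun z => (η₂ z) ^ 2) P = (volume.restrict (Ici (0 : ℝ))).withDensity f)
    (hint₁ : Integrable η₁ P) (hint₂ : Integrable η₂ P)
    (hm₁ : ∫ z, η₁ z ∂P = 0) (hm₂ : ∫ z, η₂ z ∂P = 0)
    (hv₁ : ∫ z, (η₁ z) ^ 2 ∂P = 1) (hv₂ : ∫ z, (η₂ z) ^ 2 ∂P = 1) :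
    ∀ B₁ B₂ : Set ℝ, MeasurableSet B₁ → MeasurableSet B₂ → B₁ ⊆ Ici 0 → B₂ ⊆ Ici 0 →
      ∀ x : ℝ × ℝ, x ∈ Ici (0 : ℝ) ×ˢ Ici (0 : ℝ) → x.1 < k * x.2 →
        ContinuousWithinAt
          (fun y : ℝ × ℝ =>
            P {z | ψ (ψ y.1 y.2 * (η₁ z) ^ 2) y.1 * (η₂ z) ^ 2 ∈ B₁ ∧
                   ψ y.1 y.2 * (η₁ z) ^ 2 ∈ B₂})
          (Ici (0 : ℝ) ×ˢ Ici (0 : ℝ)) x := by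
  intro B₁ B₂ hB₁ hB₂ _ _ x hx hxlt
  -- the set-valued family, depending only on the first coordinate
  set S : ℝ → Set Ω' := fun t =>
    {z | ψ (ω * (η₁ z) ^ 2) t * (η₂ z) ^ 2 ∈ B₁ ∧ ω * (η₁ z) ^ 2 ∈ B₂} with hS
  have hmS : ∀ t, MeasurableSet (S t) := by
    intro t
    have h1 : Measurable fun z => ψ (ω * (η₁ z) ^ 2) t * (η₂ z) ^ 2 := by
      simp only [hψ]
      have hind : Measurable fun z => (if k * t < ω * (η₁ z) ^ 2 then (1:ℝ) else 0) := by
        apply Measurable.ite _ measurable_const measurable_const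
        exact measurableSet_lt measurable_const (measurable_const.mul (hη₁.pow_const 2))
      exact ((measurable_const.add ((measurable_const.mul
        (measurable_const.mul (hη₁.pow_const 2))).mul hind))).mul (hη₂.pow_const 2)
    have h2 : Measurable fun z => ω * (η₁ z) ^ 2 :=
      measurable_const.mul (hη₁.pow_const 2)
    exact (h1 hB₁).inter (h2 hB₂)
  -- the null set where the indicator can jump
  have h0 : P {z | ω * (η₁ z) ^ 2 = k * x.1} = 0 := by
    have hmset : MeasurableSet {u : ℝ | ω * u = k * x.1} :=
      measurableSet_eq_fun (measurable_const.mul measurable_id) measurable_const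
    have heq : {z | ω * (η₁ z) ^ 2 = k * x.1}
        = (fun z => (η₁ z) ^ 2) ⁻¹' {u | ω * u = k * x.1} := rfl
    rw [heq, ← Measure.map_apply (hη₁.pow_const 2) hmset, hd₁]
    refine withDensity_absolutelyContinuous _ _ ?_
    have hsing : {u : ℝ | ω * u = k * x.1} = {k * x.1 / ω} := by
      ext u
      simp only [mem_setOf_eq, mem_singleton_iff]
      rw [eq_div_iff hω.ne', mul_comm]
    rw [Measure.restrict_apply hmset, hsing]
    exact measure_mono_null inter_subset_left (measure_singleton _)
  -- continuity of t ↦ P (S t) at x.1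
  have hg : ContinuousAt (fun t => P (S t)) x.1 := by
    rw [ContinuousAt, tendsto_iff_seq_tendsto]
    intro u hu
    have hrw : ∀ t, P (S t) = ∫⁻ z, (S t).indicator 1 z ∂P := fun t =>
      (lintegral_indicator_one (hmS t)).symm
    simp only [hrw]
    refine tendsto_lintegral_of_dominated_convergence (fun _ => 1)
      (fun n => (measurable_one.indicator (hmS (u n)))) ?_ ?_ ?_
    · intro n
      filter_upwards with z
      exact indicator_le_self' (fun _ _ => zero_le_one) z
    · simp
    · filter_upwards [(compl_mem_ae_iff (μ := P)).mpr h0] with z hz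
      have hz' : ω * (η₁ z) ^ 2 ≠ k * x.1 := hz
      have hev : ∀ᶠ n in atTop,
          ((k * u n < ω * (η₁ z) ^ 2) ↔ (k * x.1 < ω * (η₁ z) ^ 2)) := by
        rcases lt_or_gt_of_ne hz' with hlt | hgt
        · -- ω η₁² < k x.1 : eventually ω η₁² < k uₙ
          have : ∀ᶠ n in atTop, ω * (η₁ z) ^ 2 < k * (u n) :=
            (tendsto_const_nhds.mul hu).eventually (eventually_gt_nhds hlt)
          filter_upwards [this] with n hn
          constructor
          · intro h; exact absurd h (not_lt.mpr hn.le)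
          · intro h; exact absurd h (not_lt.mpr hlt.le)
        · have : ∀ᶠ n in atTop, k * (u n) < ω * (η₁ z) ^ 2 :=
            (tendsto_const_nhds.mul hu).eventually (eventually_lt_nhds hgt)
          filter_upwards [this] with n hn
          exact ⟨fun _ => hgt, fun _ => hn⟩
      have hev2 : ∀ᶠ n in atTop,
          (S (u n)).indicator (1 : Ω' → ℝ≥0∞) z = (S x.1).indicator 1 z := by
        filter_upwards [hev] with n hn
        have hmem : z ∈ S (u n) ↔ z ∈ S x.1 := by
          simp only [hS, mem_setOf_eq, hψ]
          rw [if_congr hn rfl rfl]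
        by_cases h : z ∈ S x.1
        · rw [indicator_of_mem (hmem.mpr h), indicator_of_mem h]
        · rw [indicator_of_notMem (fun hc => h (hmem.mp hc)), indicator_of_notMem h]
      exact Tendsto.congr' (hev2.mono fun n hn => hn.symm) tendsto_const_nhds
  -- compose with fst
  have hF : ContinuousWithinAt (fun y : ℝ × ℝ => P (S y.1))
      (Ici (0 : ℝ) ×ˢ Ici (0 : ℝ)) x :=
    (hg.comp continuousAt_fst).continuousWithinAt
  -- locally the original function agrees with y ↦ P (S y.1)
  have hopen : IsOpen {y : ℝ × ℝ | y.1 < k * y.2} :=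
    isOpen_lt continuous_fst (continuous_const.mul continuous_snd)
  have hnhds : {y : ℝ × ℝ | y.1 < k * y.2} ∈
      nhdsWithin x (Ici (0 : ℝ) ×ˢ Ici (0 : ℝ)) :=
    mem_nhdsWithin_of_mem_nhds (hopen.mem_nhds hxlt)
  have heqset : ∀ y : ℝ × ℝ, y.1 < k * y.2 →
      P {z | ψ (ψ y.1 y.2 * (η₁ z) ^ 2) y.1 * (η₂ z) ^ 2 ∈ B₁ ∧
             ψ y.1 y.2 * (η₁ z) ^ 2 ∈ B₂} = P (S y.1) := by
    intro y hy
    have hψy : ψ y.1 y.2 = ω := by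
      rw [hψ, if_neg (not_lt.mpr hy.le), mul_zero, add_zero]
    rw [hψy]
  refine hF.congr_of_eventuallyEq ?_ ?_
  · filter_upwards [hnhds] with y hy
    exact heqset y hy
  · exact heqset x hxlt
end

section
/- Under Assumption A, define for x = (x₁,x₂) ∈ [0,∞)² and Borel rectangles B = B₁ × B₂ ⊆ [0,∞)²: T(x, B) = P[ψ(ω·η₁², x₁)·η₂² ∈ B₁, ω·η₁² ∈ B₂, ψ((ω+α·x₁)·η₁², x₁)·η₂² ∈ B₁, and (ω+α·x₁)·η₁² ∈ B₂], where η₁, η₂ are i.i.d. copies of η. Then: (a) for each such rectangle B, the map x ↦ T(x, B) is continuous on [0,∞)²; (b) T(x, B) ≤ P²(x, B) := P[ψ(ψ(x₁,x₂)·η₁², x₁)·η₂² ∈ B₁ and ψ(x₁,x₂)·η₁² ∈ B₂] for all x and all rectangles B; and (c) T(x, [0,∞)×[0,∞)) = 1 for all x. -/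
open MeasureTheory ProbabilityTheory Set Filter
open scoped ENNReal Topology symmDiff

/-!
Put `u = η₁²`, `v = η₂²`; the pair `(u, v)` has law `μ ⊗ μ` with `μ` absolutely continuous and
carried by `[0, ∞)`. Both `T(x, B)` and `P²(x, B)` are then probabilities of events in `(u, v)`:
`P²` is that of the two-step event for the actual value `ψ(x₁, x₂) ∈ {ω, ω + α x₁}`, and `T` that
of the intersection of the two-step events for both values. This gives (b), and (c) because all
quantities involved are nonnegative.

For (a), `x₁` enters only through the threshold `k x₁ < c u` and through dilations of `B₁` and
`B₂` by the positive factors `c` and `ω + α c u`. Moving the threshold costs the `μ`-mass of a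
shrinking interval, which vanishes since `μ` has no atoms. Dilating a Borel set costs little for an
absolutely continuous law, since dilation is continuous on `L¹(ℝ)` (approximate by continuous
compactly supported functions) and `μ` is tight; in the `v`-variable this is integrated in `u` by
dominated convergence.
-/

theorem lintegral_comp_mul_left (F : ℝ → ℝ≥0∞) {a : ℝ} (ha : a ≠ 0) :
    ∫⁻ t, F (a * t) = ENNReal.ofReal |a⁻¹| * ∫⁻ t, F t := by
  rw [← smul_eq_mul, ← lintegral_smul_measure, ← Real.map_volume_mul_left ha]
  exact (lintegral_map_equiv F (Homeomorph.mulLeft₀ a ha).toMeasurableEquiv).symm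

theorem HasCompactSupport.tendsto_lintegral_enorm_comp_mul_sub {E : Type*}
    [NormedAddCommGroup E] {g : ℝ → E}
    (hg : Continuous g) (hgc : HasCompactSupport g) :
    Tendsto (fun r => ∫⁻ t, ‖g (r * t) - g t‖ₑ) (𝓝 1) (𝓝 0) := by
  obtain ⟨R, hR⟩ := hgc.isCompact.isBounded.subset_closedBall 0
  obtain ⟨C, hC⟩ := hg.bounded_above_of_compact_support hgc
  have hzero : ∀ t, R < |t| → g t = 0 := fun t ht =>
    image_eq_zero_of_notMem_tsupport fun h => (by simpa using hR h : |t| ≤ R).not_gt ht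
  have hbound : ∀ᶠ r in 𝓝 (1 : ℝ), ∀ᵐ t, ‖g (r * t) - g t‖ₑ ≤
      (Metric.closedBall 0 (2 * R)).indicator (fun _ => 2 * ENNReal.ofReal C) t := by
    filter_upwards [Ioi_mem_nhds (show (1 / 2 : ℝ) < 1 by norm_num)] with r (hr : 1 / 2 < r)
    refine .of_forall fun t => ?_
    by_cases ht : t ∈ Metric.closedBall 0 (2 * R)
    · rw [indicator_of_mem ht, two_mul]
      refine (enorm_sub_le).trans (add_le_add ?_ ?_) <;>
        exact (ofReal_norm _).symm.trans_le (ENNReal.ofReal_le_ofReal (hC _))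
    · have ht' : 2 * R < |t| := by simpa using ht
      have hrt : R < |r * t| := by
        rw [abs_mul, abs_of_pos (by positivity : (0 : ℝ) < r)]
        nlinarith [abs_nonneg t]
      simp [hzero t (by linarith [abs_nonneg t, hrt]), hzero _ hrt]
  have hlim : ∀ t, Tendsto (fun r => ‖g (r * t) - g t‖ₑ) (𝓝 1) (𝓝 0) := fun t => by
    have : Continuous fun r : ℝ => ‖g (r * t) - g t‖ₑ := by fun_prop
    simpa using this.tendsto 1
  simpa using tendsto_lintegral_filter_of_dominated_convergence _
    (.of_forall fun r => ((hg.comp (continuous_const_mul r)).sub hg).enorm.measurable) hbound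
    (by
      simp only [lintegral_indicator measurableSet_closedBall, setLIntegral_const]
      exact ENNReal.mul_ne_top (by finiteness) measure_closedBall_lt_top.ne)
    (.of_forall hlim)

theorem MeasureTheory.Integrable.tendsto_lintegral_enorm_comp_mul_sub {E : Type*}
    [NormedAddCommGroup E] [NormedSpace ℝ E] {h : ℝ → E} (hh : Integrable h) :
    Tendsto (fun r => ∫⁻ t, ‖h (r * t) - h t‖ₑ) (𝓝 1) (𝓝 0) := by
  rw [ENNReal.tendsto_nhds_zero]
  intro ε hε
  have hε4 : 0 < ε / 4 := ENNReal.div_pos hε.ne' (by norm_num)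
  obtain ⟨g, hgc, hhg, hg, hgi⟩ := hh.exists_hasCompactSupport_lintegral_sub_le hε4.ne'
  filter_upwards [Ioi_mem_nhds (show (1 / 2 : ℝ) < 1 by norm_num),
    ENNReal.tendsto_nhds_zero.1 (hgc.tendsto_lintegral_enorm_comp_mul_sub hg) _ hε4]
    with r (hr : 1 / 2 < r) hgr
  have hr0 : r ≠ 0 := by positivity
  have hscaled : ∫⁻ t, ‖h (r * t) - g (r * t)‖ₑ ≤ 2 * (ε / 4) := by
    rw [lintegral_comp_mul_left (fun t => ‖h t - g t‖ₑ) hr0]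
    gcongr
    rw [abs_inv, abs_of_pos (by positivity), ← ENNReal.ofReal_ofNat 2]
    exact ENNReal.ofReal_le_ofReal (by rw [inv_le_comm₀ (by positivity) two_pos]; linarith)
  have hmeas₁ : AEMeasurable fun t => ‖h (r * t) - g (r * t)‖ₑ :=
    ((hh.comp_mul_left' hr0).sub (hgi.comp_mul_left' hr0)).aestronglyMeasurable.enorm
  have hmeas₃ : AEMeasurable fun t => ‖g t - h t‖ₑ := (hgi.sub hh).aestronglyMeasurable.enorm
  calc ∫⁻ t, ‖h (r * t) - h t‖ₑ
      ≤ ∫⁻ t, (‖h (r * t) - g (r * t)‖ₑ + ‖g (r * t) - g t‖ₑ + ‖g t - h t‖ₑ) :=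
        lintegral_mono fun t => by
          simpa only [edist_eq_enorm_sub] using edist_triangle4 (h (r * t)) (g (r * t)) (g t) (h t)
    _ = (∫⁻ t, ‖h (r * t) - g (r * t)‖ₑ) + (∫⁻ t, ‖g (r * t) - g t‖ₑ) + ∫⁻ t, ‖g t - h t‖ₑ := by
        rw [lintegral_add_right' _ hmeas₃, lintegral_add_left' hmeas₁]
    _ ≤ 2 * (ε / 4) + ε / 4 + ε / 4 := by
        gcongr
        simpa only [enorm_sub_rev] using hhg
    _ = ε := by
        rw [← add_one_mul, ← add_one_mul, show (2 + 1 + 1 : ℝ≥0∞) = 4 by norm_num,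
          ENNReal.mul_div_cancel (by norm_num) (by norm_num)]

theorem tendsto_volume_preimage_mul_symmDiff {D : Set ℝ} (hD : MeasurableSet D)
    (hD' : volume D ≠ ∞) :
    Tendsto (fun r => volume (((r * ·) ⁻¹' D) ∆ D)) (𝓝 1) (𝓝 0) := by
  have hint : Integrable (D.indicator fun _ => (1 : ℝ)) :=
    (integrable_indicator_iff hD).2 (integrableOn_const hD')
  refine hint.tendsto_lintegral_enorm_comp_mul_sub.congr fun r => ?_
  rw [← lintegral_indicator_one ((hD.preimage (measurable_const_mul r)).symmDiff hD)]
  refine lintegral_congr fun t => ?_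
  by_cases h₁ : r * t ∈ D <;> by_cases h₂ : t ∈ D <;> simp [indicator, h₁, h₂, mem_symmDiff]

theorem MeasureTheory.Measure.AbsolutelyContinuous.tendsto_measure_zero {α ι : Type*}
    [MeasurableSpace α] {μ ν : Measure α} [IsFiniteMeasure μ] [SigmaFinite ν] (hμν : μ ≪ ν)
    {l : Filter ι} {s : ι → Set α} (hs : Tendsto (ν ∘ s) l (𝓝 0)) :
    Tendsto (μ ∘ s) l (𝓝 0) := by
  rw [← Measure.withDensity_rnDeriv_eq μ ν hμν]
  simpa only [Function.comp_def, withDensity_apply'] using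
    tendsto_setLIntegral_zero (Measure.lintegral_rnDeriv_lt_top μ ν).ne hs

theorem MeasureTheory.Measure.AbsolutelyContinuous.tendsto_measure_preimage_mul_symmDiff_one
    {μ : Measure ℝ} [IsFiniteMeasure μ] (hμ : μ ≪ volume) {B : Set ℝ} (hB : MeasurableSet B) :
    Tendsto (fun r => μ (((r * ·) ⁻¹' B) ∆ B)) (𝓝 1) (𝓝 0) := by
  rw [ENNReal.tendsto_nhds_zero]
  intro ε hε
  have hε2 : 0 < ε / 2 := ENNReal.div_pos hε.ne' (by norm_num)
  have htight : Tendsto (fun R : ℝ => μ (Metric.closedBall 0 R)ᶜ) atTop (𝓝 0) := by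
    simpa using tendsto_measure_compl_closedBall_of_isTightMeasureSet
      (isTightMeasureSet_singleton (μ := μ)) 0
  obtain ⟨R, hR⟩ := (ENNReal.tendsto_atTop_zero.1 htight _ hε2)
  set D := B ∩ Metric.closedBall 0 (2 * R)
  have hD : MeasurableSet D := hB.inter measurableSet_closedBall
  have hsmall := ENNReal.tendsto_nhds_zero.1 (hμ.tendsto_measure_zero
    (tendsto_volume_preimage_mul_symmDiff hD
      ((measure_mono inter_subset_right).trans_lt measure_closedBall_lt_top).ne)) _ hε2
  filter_upwards [Ioo_mem_nhds (show (-2 : ℝ) < 1 by norm_num) (show (1 : ℝ) < 2 by norm_num),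
    hsmall] with r hr hrD
  have hsub : ((r * ·) ⁻¹' B) ∆ B ⊆ ((r * ·) ⁻¹' D) ∆ D ∪ (Metric.closedBall 0 R)ᶜ := by
    intro t ht
    by_cases htR : t ∈ Metric.closedBall 0 R
    · left
      have htR' : |t| ≤ R := by simpa using htR
      have hr' : |r| < 2 := abs_lt.2 hr
      have h2R : ∀ s, |s| ≤ 2 * R → (s ∈ D ↔ s ∈ B) := fun s hs => by simp [D, hs]
      have hrt := h2R (r * t) (by rw [abs_mul]; nlinarith [abs_nonneg r, abs_nonneg t])
      have htt := h2R t (by linarith [abs_nonneg t])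
      simpa [mem_symmDiff, hrt, htt] using ht
    · exact Or.inr htR
  calc μ (((r * ·) ⁻¹' B) ∆ B) ≤ μ (((r * ·) ⁻¹' D) ∆ D) + μ (Metric.closedBall 0 R)ᶜ :=
        (measure_mono hsub).trans (measure_union_le _ _)
    _ ≤ ε / 2 + ε / 2 := add_le_add hrD (hR R le_rfl)
    _ = ε := ENNReal.add_halves ε

theorem MeasureTheory.Measure.AbsolutelyContinuous.tendsto_measure_preimage_mul_symmDiff
    {μ : Measure ℝ} [IsFiniteMeasure μ] (hμ : μ ≪ volume) {B : Set ℝ} (hB : MeasurableSet B)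
    {b₀ : ℝ} (hb₀ : b₀ ≠ 0) :
    Tendsto (fun b => μ (((b * ·) ⁻¹' B) ∆ ((b₀ * ·) ⁻¹' B))) (𝓝 b₀) (𝓝 0) := by
  have hmap : μ.map (b₀ * ·) ≪ volume := by
    refine (hμ.map (measurable_const_mul b₀)).trans ?_
    rw [Real.map_volume_mul_left hb₀]
    exact Measure.smul_absolutelyContinuous
  have hratio : Tendsto (fun b => b / b₀) (𝓝 b₀) (𝓝 1) := by
    simpa [hb₀] using (tendsto_id (x := 𝓝 b₀)).div_const b₀
  refine ((hmap.tendsto_measure_preimage_mul_symmDiff_one hB).comp hratio).congr fun b => ?_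
  have hset : ((b * ·) ⁻¹' B) ∆ ((b₀ * ·) ⁻¹' B) = (b₀ * ·) ⁻¹' (((b / b₀ * ·) ⁻¹' B) ∆ B) := by
    ext t
    simp only [mem_symmDiff, mem_preimage, ← mul_assoc, div_mul_cancel₀ _ hb₀]
  rw [Function.comp_apply, hset, Measure.map_apply (measurable_const_mul b₀)
    ((hB.preimage (measurable_const_mul _)).symmDiff hB)]

theorem tendsto_measure_uIcc {μ : Measure ℝ} [IsFiniteMeasureOnCompacts μ] [NullSingletonClass μ]
    (a₀ : ℝ) : Tendsto (fun a => μ (uIcc a a₀)) (𝓝 a₀) (𝓝 0) := by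
  have hδ : Tendsto (fun a => |a - a₀|) (𝓝 a₀) (𝓝 0) := by
    simpa using ((tendsto_id (x := 𝓝 a₀)).sub_const a₀).abs
  refine tendsto_of_tendsto_of_tendsto_of_le_of_le tendsto_const_nhds
    ((tendsto_measure_Icc μ a₀).comp hδ) (fun _ => zero_le) fun a => measure_mono ?_
  intro x hx
  rw [mem_uIcc] at hx
  simp only [mem_Icc]
  constructor <;> rcases hx with hx | hx <;> cases abs_cases (a - a₀) <;> linarith

theorem tendsto_measure_prod_of_ae_tendsto_measure_prodMk {ι X Y : Type*} [MeasurableSpace X]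
    [MeasurableSpace Y] {μ : Measure X} {ν : Measure Y} [IsFiniteMeasure μ] [IsFiniteMeasure ν]
    {l : Filter ι} [l.IsCountablyGenerated] {E : ι → Set (X × Y)} (hE : ∀ i, MeasurableSet (E i))
    (h : ∀ᵐ x ∂μ, Tendsto (fun i => ν (Prod.mk x ⁻¹' E i)) l (𝓝 0)) :
    Tendsto (fun i => μ.prod ν (E i)) l (𝓝 0) := by
  simp_rw [Measure.prod_apply (hE _)]
  simpa using tendsto_lintegral_filter_of_dominated_convergence (fun _ => ν univ)
    (.of_forall fun i => measurable_measure_prodMk_left (hE i))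
    (.of_forall fun i => .of_forall fun x => measure_mono (subset_univ _))
    (by simp only [lintegral_const]; finiteness) h

theorem tendsto_measure_of_tendsto_measure_symmDiff {α ι : Type*} [MeasurableSpace α]
    {μ : Measure α} {l : Filter ι} {s : ι → Set α} {s₀ : Set α} (hs₀ : μ s₀ ≠ ∞)
    (h : Tendsto (fun i => μ (s i ∆ s₀)) l (𝓝 0)) :
    Tendsto (fun i => μ (s i)) l (𝓝 (μ s₀)) := by
  refine tendsto_of_tendsto_of_tendsto_of_le_of_le (g := fun i => μ s₀ - μ (s i ∆ s₀))
    (h := fun i => μ s₀ + μ (s i ∆ s₀)) ?_ ?_ (fun i => ?_) (fun i => ?_)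
  · simpa using ENNReal.Tendsto.sub tendsto_const_nhds h (.inl hs₀)
  · simpa using (tendsto_const_nhds (x := μ s₀)).add h
  · rw [tsub_le_iff_right, symmDiff_comm]
    exact tsub_le_iff_left.1 le_measure_symmDiff
  · exact tsub_le_iff_left.1 le_measure_symmDiff

theorem Set.inter_symmDiff_inter_subset {α : Type*} (s t s' t' : Set α) :
    (s ∩ t) ∆ (s' ∩ t') ⊆ s ∆ s' ∪ t ∆ t' := by
  intro x
  simp only [mem_symmDiff, mem_inter_iff, mem_union]
  tauto

theorem lt_iff_lt_of_notMem_uIcc {α : Type*} [LinearOrder α] {a b x : α} (h : x ∉ uIcc a b) :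
    a < x ↔ b < x := by
  simp only [mem_uIcc, not_or, not_and_or, not_le] at h
  constructor <;> intro hx <;> rcases h with ⟨h₁ | h₁, h₂ | h₂⟩ <;> order

/-- In the coordinates `(u, v) = (η₁², η₂²)`; `P²(x, B)` is the probability of this event for
`c = ψ(x₁, x₂)` and `x = x₁`. -/
def twoStepEvent (ψ : ℝ → ℝ → ℝ) (B₁ B₂ : Set ℝ) (c x : ℝ) : Set (ℝ × ℝ) :=
  {p | ψ (c * p.1) x * p.2 ∈ B₁ ∧ c * p.1 ∈ B₂}

theorem twoStepEvent_symmDiff_subset {ω α k : ℝ} {ψ : ℝ → ℝ → ℝ}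
    (hψ : ∀ x₁ x₂, ψ x₁ x₂ = ω + α * x₁ * if k * x₂ < x₁ then 1 else 0) (B₁ B₂ : Set ℝ)
    {c c₀ : ℝ} (hc : 0 < c) (hc₀ : 0 < c₀) (x x₀ : ℝ) :
    twoStepEvent ψ B₁ B₂ c x ∆ twoStepEvent ψ B₁ B₂ c₀ x₀ ⊆
      Prod.fst ⁻¹' (((c * ·) ⁻¹' B₂) ∆ ((c₀ * ·) ⁻¹' B₂) ∪ uIcc (k * x / c) (k * x₀ / c₀)) ∪
        ((fun p => (ω + α * (c * p.1)) * p.2) ⁻¹' B₁) ∆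
          ((fun p => (ω + α * (c₀ * p.1)) * p.2) ⁻¹' B₁) := by
  rintro ⟨u, v⟩ hp
  by_contra hnot
  simp only [mem_union, mem_preimage, not_or] at hnot
  obtain ⟨⟨hB₂, hI⟩, hB₁⟩ := hnot
  have hthr : k * x < c * u ↔ k * x₀ < c₀ * u := by
    rw [← div_lt_iff₀' hc, ← div_lt_iff₀' hc₀]
    exact lt_iff_lt_of_notMem_uIcc hI
  simp only [twoStepEvent, mem_symmDiff, mem_ofPred_eq, mem_preimage, hψ, hthr] at hp hB₁ hB₂
  split_ifs at hp <;> simp only [mul_one, mul_zero, add_zero] at hp <;> tauto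

theorem tendsto_measure_twoStepEvent_symmDiff {μ ν : Measure ℝ} [IsFiniteMeasure μ]
    [IsFiniteMeasure ν] (hμ : μ ≪ volume) (hν : ν ≪ volume) (hμ₀ : μ (Iio 0) = 0)
    {ω α k : ℝ} (hω : 0 < ω) (hα : 0 ≤ α) {ψ : ℝ → ℝ → ℝ}
    (hψ : ∀ x₁ x₂, ψ x₁ x₂ = ω + α * x₁ * if k * x₂ < x₁ then 1 else 0)
    {B₁ B₂ : Set ℝ} (hB₁ : MeasurableSet B₁) (hB₂ : MeasurableSet B₂) {c₀ : ℝ} (hc₀ : 0 < c₀)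
    (x₀ : ℝ) :
    Tendsto (fun q : ℝ × ℝ => μ.prod ν (twoStepEvent ψ B₁ B₂ q.1 q.2 ∆ twoStepEvent ψ B₁ B₂ c₀ x₀))
      (𝓝 (c₀, x₀)) (𝓝 0) := by
  have : NullSingletonClass μ := ⟨fun x => hμ (Real.volume_singleton)⟩
  set W : ℝ → Set (ℝ × ℝ) := fun c => ((fun p => (ω + α * (c * p.1)) * p.2) ⁻¹' B₁) ∆
    ((fun p => (ω + α * (c₀ * p.1)) * p.2) ⁻¹' B₁)
  have hW : Tendsto (fun c => μ.prod ν (W c)) (𝓝 c₀) (𝓝 0) := by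
    refine tendsto_measure_prod_of_ae_tendsto_measure_prodMk (fun c => ?_) ?_
    · exact (hB₁.preimage (by fun_prop)).symmDiff (hB₁.preimage (by fun_prop))
    · have hpos : ∀ᵐ u ∂μ, 0 ≤ u :=
        ae_iff.2 (measure_mono_null (fun u (hu : ¬ 0 ≤ u) => mem_Iio.2 (not_le.1 hu)) hμ₀)
      filter_upwards [hpos] with u hu
      have hb : Tendsto (fun c => ω + α * (c * u)) (𝓝 c₀) (𝓝 (ω + α * (c₀ * u))) :=
        (by fun_prop : Continuous fun c => ω + α * (c * u)).tendsto c₀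
      exact (hν.tendsto_measure_preimage_mul_symmDiff hB₁ (by positivity)).comp hb
  have hdil : Tendsto (fun c => μ (((c * ·) ⁻¹' B₂) ∆ ((c₀ * ·) ⁻¹' B₂))) (𝓝 c₀) (𝓝 0) :=
    hμ.tendsto_measure_preimage_mul_symmDiff hB₂ hc₀.ne'
  have hthr : Tendsto (fun q : ℝ × ℝ => k * q.2 / q.1) (𝓝 (c₀, x₀)) (𝓝 (k * x₀ / c₀)) :=
    ((continuous_const.mul continuous_snd).continuousAt).div continuous_fst.continuousAt hc₀.ne'
  have hbound : Tendsto (fun q : ℝ × ℝ =>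
      (μ (((q.1 * ·) ⁻¹' B₂) ∆ ((c₀ * ·) ⁻¹' B₂)) + μ (uIcc (k * q.2 / q.1) (k * x₀ / c₀))) *
        ν univ + μ.prod ν (W q.1)) (𝓝 (c₀, x₀)) (𝓝 0) := by
    have hfst : Tendsto Prod.fst (𝓝 (c₀, x₀)) (𝓝 c₀) := continuous_fst.tendsto _
    simpa using (ENNReal.Tendsto.mul_const ((hdil.comp hfst).add
      ((tendsto_measure_uIcc _).comp hthr)) (.inr (measure_ne_top ν univ))).add (hW.comp hfst)
  refine tendsto_of_tendsto_of_tendsto_of_le_of_le' tendsto_const_nhds hbound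
    (.of_forall fun _ => zero_le) ?_
  filter_upwards [continuous_fst.continuousAt.eventually (Ioi_mem_nhds hc₀)] with q hq
  refine (measure_mono (twoStepEvent_symmDiff_subset hψ B₁ B₂ hq hc₀ q.2 x₀)).trans ?_
  refine (measure_union_le _ _).trans (add_le_add ?_ le_rfl)
  rw [← prod_univ, Measure.prod_prod]
  gcongr
  exact measure_union_le _ _

/-- `T(x, B)` is the probability of this event, the two-step event for both values `ω` and
`ω + α x₁` that `ψ(x₁, x₂)` can take. -/
def bothRegimesEvent (ψ : ℝ → ℝ → ℝ) (ω α : ℝ) (B₁ B₂ : Set ℝ) (x : ℝ) : Set (ℝ × ℝ) :=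
  {p | ψ (ω * p.1) x * p.2 ∈ B₁ ∧ ω * p.1 ∈ B₂ ∧
    ψ ((ω + α * x) * p.1) x * p.2 ∈ B₁ ∧ (ω + α * x) * p.1 ∈ B₂}

theorem bothRegimesEvent_eq_inter (ψ : ℝ → ℝ → ℝ) (ω α : ℝ) (B₁ B₂ : Set ℝ) (x : ℝ) :
    bothRegimesEvent ψ ω α B₁ B₂ x =
      twoStepEvent ψ B₁ B₂ ω x ∩ twoStepEvent ψ B₁ B₂ (ω + α * x) x :=
  ext fun _ => and_assoc.symm

theorem bothRegimesEvent_subset_twoStepEvent {ω α k : ℝ} {ψ : ℝ → ℝ → ℝ}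
    (hψ : ∀ x₁ x₂, ψ x₁ x₂ = ω + α * x₁ * if k * x₂ < x₁ then 1 else 0) (B₁ B₂ : Set ℝ)
    (x₁ x₂ : ℝ) : bothRegimesEvent ψ ω α B₁ B₂ x₁ ⊆ twoStepEvent ψ B₁ B₂ (ψ x₁ x₂) x₁ := by
  rw [bothRegimesEvent_eq_inter, hψ x₁ x₂]
  split_ifs <;> simp

theorem Ici_prod_Ici_subset_bothRegimesEvent {ω α k : ℝ} (hω : 0 ≤ ω) (hα : 0 ≤ α) {ψ : ℝ → ℝ → ℝ}
    (hψ : ∀ x₁ x₂, ψ x₁ x₂ = ω + α * x₁ * if k * x₂ < x₁ then 1 else 0) {x : ℝ} (hx : 0 ≤ x) :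
    Ici 0 ×ˢ Ici 0 ⊆ bothRegimesEvent ψ ω α (Ici 0) (Ici 0) x := by
  rintro ⟨u, v⟩ ⟨hu, hv⟩
  have hψ₀ : ∀ y x₂, 0 ≤ y → 0 ≤ ψ y x₂ := fun y x₂ hy => by rw [hψ]; positivity
  simp only [mem_Ici] at hu hv
  simp only [bothRegimesEvent, mem_ofPred_eq, mem_Ici]
  refine ⟨?_, ?_, ?_, ?_⟩ <;> first | positivity | exact mul_nonneg (hψ₀ _ _ (by positivity)) hv

theorem continuousAt_measure_preimage_bothRegimesEvent {Ω : Type*} [MeasurableSpace Ω]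
    {P : Measure Ω} [IsFiniteMeasure P] {X : Ω → ℝ × ℝ} (hX : Measurable X) {μ ν : Measure ℝ}
    [IsFiniteMeasure μ] [IsFiniteMeasure ν] (hlaw : P.map X = μ.prod ν) (hμ : μ ≪ volume)
    (hν : ν ≪ volume) (hμ₀ : μ (Iio 0) = 0) {ω α k : ℝ} (hω : 0 < ω) (hα : 0 ≤ α)
    {ψ : ℝ → ℝ → ℝ} (hψ : ∀ x₁ x₂, ψ x₁ x₂ = ω + α * x₁ * if k * x₂ < x₁ then 1 else 0)
    {B₁ B₂ : Set ℝ} (hB₁ : MeasurableSet B₁) (hB₂ : MeasurableSet B₂) {x₀ : ℝ}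
    (hx₀ : 0 < ω + α * x₀) :
    ContinuousAt (fun x => P (X ⁻¹' bothRegimesEvent ψ ω α B₁ B₂ x)) x₀ := by
  have hfirst := (tendsto_measure_twoStepEvent_symmDiff hμ hν hμ₀ hω hα hψ hB₁ hB₂ hω x₀).comp
    ((continuous_const.prodMk continuous_id).tendsto x₀)
  have hsecond := (tendsto_measure_twoStepEvent_symmDiff hμ hν hμ₀ hω hα hψ hB₁ hB₂ hx₀ x₀).comp
    (((continuous_const.add (continuous_const.mul continuous_id)).prodMk continuous_id).tendsto x₀)
  refine tendsto_measure_of_tendsto_measure_symmDiff (measure_ne_top _ _) ?_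
  refine tendsto_of_tendsto_of_tendsto_of_le_of_le tendsto_const_nhds
    (by simpa using hfirst.add hsecond) (fun _ => zero_le) fun x => ?_
  rw [← preimage_symmDiff, bothRegimesEvent_eq_inter, bothRegimesEvent_eq_inter]
  refine (Measure.le_map_apply hX.aemeasurable _).trans ?_
  rw [hlaw]
  exact (measure_mono (inter_symmDiff_inter_subset _ _ _ _)).trans (measure_union_le _ _)

theorem stmt7_general
    {Ω' : Type*} [MeasurableSpace Ω'] (P : Measure Ω') [IsProbabilityMeasure P]
    (ω α k : ℝ) (hω : 0 < ω) (hα : 0 ≤ α)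
    (ψ : ℝ → ℝ → ℝ)
    (hψ : ∀ x₁ x₂, ψ x₁ x₂ = ω + α * x₁ * (if k * x₂ < x₁ then 1 else 0))
    (η₁ η₂ : Ω' → ℝ) (hη₁ : Measurable η₁) (hη₂ : Measurable η₂)
    (hindep : IndepFun η₁ η₂ P)
    (f : ℝ → ℝ≥0∞)
    (hd₁ : Measure.map (fun z => (η₁ z) ^ 2) P = (volume.restrict (Ici (0 : ℝ))).withDensity f)
    (hd₂ : Measure.map (fun z => (η₂ z) ^ 2) P = (volume.restrict (Ici (0 : ℝ))).withDensity f) :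
    (∀ B₁ B₂ : Set ℝ, MeasurableSet B₁ → MeasurableSet B₂ → B₁ ⊆ Ici 0 → B₂ ⊆ Ici 0 →
      ContinuousOn
        (fun y : ℝ × ℝ =>
          P {z | ψ (ω * (η₁ z) ^ 2) y.1 * (η₂ z) ^ 2 ∈ B₁ ∧
                 ω * (η₁ z) ^ 2 ∈ B₂ ∧
                 ψ ((ω + α * y.1) * (η₁ z) ^ 2) y.1 * (η₂ z) ^ 2 ∈ B₁ ∧
                 (ω + α * y.1) * (η₁ z) ^ 2 ∈ B₂})
        (Ici (0 : ℝ) ×ˢ Ici (0 : ℝ))) ∧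
    (∀ B₁ B₂ : Set ℝ, MeasurableSet B₁ → MeasurableSet B₂ → B₁ ⊆ Ici 0 → B₂ ⊆ Ici 0 →
      ∀ x₁ x₂ : ℝ, 0 ≤ x₁ → 0 ≤ x₂ →
        P {z | ψ (ω * (η₁ z) ^ 2) x₁ * (η₂ z) ^ 2 ∈ B₁ ∧
               ω * (η₁ z) ^ 2 ∈ B₂ ∧
               ψ ((ω + α * x₁) * (η₁ z) ^ 2) x₁ * (η₂ z) ^ 2 ∈ B₁ ∧
               (ω + α * x₁) * (η₁ z) ^ 2 ∈ B₂} ≤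
        P {z | ψ (ψ x₁ x₂ * (η₁ z) ^ 2) x₁ * (η₂ z) ^ 2 ∈ B₁ ∧
               ψ x₁ x₂ * (η₁ z) ^ 2 ∈ B₂}) ∧
    (∀ x₁ x₂ : ℝ, 0 ≤ x₁ → 0 ≤ x₂ →
      P {z | ψ (ω * (η₁ z) ^ 2) x₁ * (η₂ z) ^ 2 ∈ Ici (0 : ℝ) ∧
             ω * (η₁ z) ^ 2 ∈ Ici (0 : ℝ) ∧
             ψ ((ω + α * x₁) * (η₁ z) ^ 2) x₁ * (η₂ z) ^ 2 ∈ Ici (0 : ℝ) ∧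
             (ω + α * x₁) * (η₁ z) ^ 2 ∈ Ici (0 : ℝ)} = 1) := by
  set X : Ω' → ℝ × ℝ := fun z => ((η₁ z) ^ 2, (η₂ z) ^ 2)
  set μ := (volume.restrict (Ici (0 : ℝ))).withDensity f
  have : IsProbabilityMeasure μ := hd₁ ▸ Measure.isProbabilityMeasure_map (by fun_prop)
  have hμ : μ ≪ volume := (withDensity_absolutelyContinuous _ _).trans
    (Measure.absolutelyContinuous_of_le Measure.restrict_le_self)
  have hμ₀ : μ (Iio 0) = 0 := withDensity_absolutelyContinuous _ _ (by simp [Iio_inter_Ici])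
  have hsq : IndepFun (fun z => (η₁ z) ^ 2) (fun z => (η₂ z) ^ 2) P :=
    hindep.comp (measurable_id.pow_const 2) (measurable_id.pow_const 2)
  have hlaw : P.map X = μ.prod μ := by
    rw [(indepFun_iff_map_prod_eq_prod_map_map (by fun_prop) (by fun_prop)).1 hsq, hd₁, hd₂]
  refine ⟨fun B₁ B₂ hB₁ hB₂ _ _ y hy => ?_, fun B₁ B₂ _ _ _ _ x₁ x₂ _ _ => ?_,
    fun x₁ _ hx₁ _ => ?_⟩
  · show ContinuousWithinAt (fun y : ℝ × ℝ => P (X ⁻¹' bothRegimesEvent ψ ω α B₁ B₂ y.1)) _ _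
    have hy₁ : 0 ≤ y.1 := hy.1
    exact ((continuousAt_measure_preimage_bothRegimesEvent (by fun_prop) hlaw hμ hμ hμ₀ hω hα hψ
      hB₁ hB₂ (by positivity)).comp continuousAt_fst).continuousWithinAt
  · exact measure_mono
      (preimage_mono (f := X) (bothRegimesEvent_subset_twoStepEvent hψ B₁ B₂ x₁ x₂))
  · show P (X ⁻¹' bothRegimesEvent ψ ω α (Ici 0) (Ici 0) x₁) = 1
    have huniv : X ⁻¹' bothRegimesEvent ψ ω α (Ici 0) (Ici 0) x₁ = univ :=
      eq_univ_of_forall fun z => Ici_prod_Ici_subset_bothRegimesEvent hω.le hα hψ hx₁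
        (show X z ∈ Ici 0 ×ˢ Ici 0 from ⟨sq_nonneg (η₁ z), sq_nonneg (η₂ z)⟩)
    rw [huniv, measure_univ]

/-- Under Assumption A, the kernel
`T(x, B₁ × B₂) = P[ψ(ω η₁², x₁) η₂² ∈ B₁, ω η₁² ∈ B₂, ψ((ω+αx₁) η₁², x₁) η₂² ∈ B₁, (ω+αx₁) η₁² ∈ B₂]`
satisfies: (a) `x ↦ T(x, B)` is continuous on `[0,∞)²` for every Borel rectangle `B`;
(b) `T(x, B) ≤ P²(x, B)`; (c) `T(x, [0,∞) × [0,∞)) = 1`. -/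
theorem stmt7
    {Ω' : Type*} [MeasurableSpace Ω'] (P : Measure Ω') [IsProbabilityMeasure P]
    (ω α k : ℝ) (hω : 0 < ω) (hα : 0 ≤ α) (hk : 0 ≤ k)
    (ψ : ℝ → ℝ → ℝ)
    (hψ : ∀ x₁ x₂, ψ x₁ x₂ = ω + α * x₁ * (if k * x₂ < x₁ then 1 else 0))
    (η₁ η₂ : Ω' → ℝ) (hη₁ : Measurable η₁) (hη₂ : Measurable η₂)
    (hindep : IndepFun η₁ η₂ P)
    (f : ℝ → ℝ≥0∞) (hf : Measurable f) (hfpos : ∀ x, 0 ≤ x → 0 < f x)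
    (hd₁ : Measure.map (fun z => (η₁ z) ^ 2) P = (volume.restrict (Ici (0 : ℝ))).withDensity f)
    (hd₂ : Measure.map (fun z => (η₂ z) ^ 2) P = (volume.restrict (Ici (0 : ℝ))).withDensity f)
    (hint₁ : Integrable η₁ P) (hint₂ : Integrable η₂ P)
    (hm₁ : ∫ z, η₁ z ∂P = 0) (hm₂ : ∫ z, η₂ z ∂P = 0)
    (hv₁ : ∫ z, (η₁ z) ^ 2 ∂P = 1) (hv₂ : ∫ z, (η₂ z) ^ 2 ∂P = 1) :
    (∀ B₁ B₂ : Set ℝ, MeasurableSet B₁ → MeasurableSet B₂ → B₁ ⊆ Ici 0 → B₂ ⊆ Ici 0 →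
      ContinuousOn
        (fun y : ℝ × ℝ =>
          P {z | ψ (ω * (η₁ z) ^ 2) y.1 * (η₂ z) ^ 2 ∈ B₁ ∧
                 ω * (η₁ z) ^ 2 ∈ B₂ ∧
                 ψ ((ω + α * y.1) * (η₁ z) ^ 2) y.1 * (η₂ z) ^ 2 ∈ B₁ ∧
                 (ω + α * y.1) * (η₁ z) ^ 2 ∈ B₂})
        (Ici (0 : ℝ) ×ˢ Ici (0 : ℝ))) ∧
    (∀ B₁ B₂ : Set ℝ, MeasurableSet B₁ → MeasurableSet B₂ → B₁ ⊆ Ici 0 → B₂ ⊆ Ici 0 →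
      ∀ x₁ x₂ : ℝ, 0 ≤ x₁ → 0 ≤ x₂ →
        P {z | ψ (ω * (η₁ z) ^ 2) x₁ * (η₂ z) ^ 2 ∈ B₁ ∧
               ω * (η₁ z) ^ 2 ∈ B₂ ∧
               ψ ((ω + α * x₁) * (η₁ z) ^ 2) x₁ * (η₂ z) ^ 2 ∈ B₁ ∧
               (ω + α * x₁) * (η₁ z) ^ 2 ∈ B₂} ≤
        P {z | ψ (ψ x₁ x₂ * (η₁ z) ^ 2) x₁ * (η₂ z) ^ 2 ∈ B₁ ∧
               ψ x₁ x₂ * (η₁ z) ^ 2 ∈ B₂}) ∧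
    (∀ x₁ x₂ : ℝ, 0 ≤ x₁ → 0 ≤ x₂ →
      P {z | ψ (ω * (η₁ z) ^ 2) x₁ * (η₂ z) ^ 2 ∈ Ici (0 : ℝ) ∧
             ω * (η₁ z) ^ 2 ∈ Ici (0 : ℝ) ∧
             ψ ((ω + α * x₁) * (η₁ z) ^ 2) x₁ * (η₂ z) ^ 2 ∈ Ici (0 : ℝ) ∧
             (ω + α * x₁) * (η₁ z) ^ 2 ∈ Ici (0 : ℝ)} = 1) :=
  stmt7_general P ω α k hω hα ψ hψ η₁ η₂ hη₁ hη₂ hindep f hd₁ hd₂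
end

section
/- Under Assumption A with k > 0, fix ε > 0 and define, for Borel rectangles B = B₁ × B₂ ⊆ [0,∞)², the set functions μ₁(B) = P[ω·η₂² ∈ B₁, ω·η₁² ≤ k·ε, ω·η₁² ∈ B₂] and μ₂(B) = P[(ω + α·ω·η₁²)·η₂² ∈ B₁, ω·η₁² > k·ε, ω·η₁² ∈ B₂], where η₁, η₂ are i.i.d. copies of η. Then for every x = (x₁,x₂) with x₁ ≤ k·x₂ and x₁ > ε one has P²(x, B) := P[ψ(ψ(x₁,x₂)·η₁², x₁)·η₂² ∈ B₁ and ψ(x₁,x₂)·η₁² ∈ B₂] ≥ μ₁(B); for every x with x₁ ≤ k·x₂ and x₁ ≤ ε one has P²(x, B) ≥ μ₂(B); and μ₁([0,∞)×[0,∞)) > 0 and μ₂([0,∞)×[0,∞)) > 0. (Hence the set C = {x₁ ≤ k·x₂} is a small set for the chain.) -/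
open MeasureTheory ProbabilityTheory Set Filter
open scoped ENNReal

lemma aux_pos (f : ℝ → ℝ≥0∞) (hf : Measurable f) (hfpos : ∀ x, 0 ≤ x → 0 < f x)
    (s : Set ℝ) (hs : MeasurableSet s) (hvol : 0 < volume (s ∩ Ici 0)) :
    0 < ((volume.restrict (Ici (0 : ℝ))).withDensity f) s := by
  rw [withDensity_apply _ hs, Measure.restrict_restrict hs]
  rw [lintegral_pos_iff_support hf]
  have hsub : s ∩ Ici 0 ⊆ Function.support f := fun x hx =>
    (hfpos x hx.2).ne'
  have heq : (volume.restrict (s ∩ Ici 0)) (Function.support f) = volume (s ∩ Ici 0) := by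
    rw [Measure.restrict_apply' (hs.inter measurableSet_Ici), inter_eq_right.2 hsub]
  rw [heq]
  exact hvol

/-- Smallness of the set `C = {x₁ ≤ k x₂}`: under Assumption A with `k > 0` and any
`ε > 0`, the two-step transition probabilities are bounded below by the nontrivial
measures `μ₁` (on `C ∩ {x₁ > ε}`) and `μ₂` (on `C ∩ {x₁ ≤ ε}`). -/
theorem stmt8
    {Ω' : Type*} [MeasurableSpace Ω'] (P : Measure Ω') [IsProbabilityMeasure P]
    (ω α k : ℝ) (hω : 0 < ω) (hα : 0 ≤ α) (hk : 0 < k)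
    (ψ : ℝ → ℝ → ℝ)
    (hψ : ∀ x₁ x₂, ψ x₁ x₂ = ω + α * x₁ * (if k * x₂ < x₁ then 1 else 0))
    (η₁ η₂ : Ω' → ℝ) (hη₁ : Measurable η₁) (hη₂ : Measurable η₂)
    (hindep : IndepFun η₁ η₂ P)
    (f : ℝ → ℝ≥0∞) (hf : Measurable f) (hfpos : ∀ x, 0 ≤ x → 0 < f x)
    (hd₁ : Measure.map (fun z => (η₁ z) ^ 2) P = (volume.restrict (Ici (0 : ℝ))).withDensity f)
    (hd₂ : Measure.map (fun z => (η₂ z) ^ 2) P = (volume.restrict (Ici (0 : ℝ))).withDensity f)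
    (hint₁ : Integrable η₁ P) (hint₂ : Integrable η₂ P)
    (hm₁ : ∫ z, η₁ z ∂P = 0) (hm₂ : ∫ z, η₂ z ∂P = 0)
    (hv₁ : ∫ z, (η₁ z) ^ 2 ∂P = 1) (hv₂ : ∫ z, (η₂ z) ^ 2 ∂P = 1)
    (ε : ℝ) (hε : 0 < ε) :
    (∀ B₁ B₂ : Set ℝ, MeasurableSet B₁ → MeasurableSet B₂ → B₁ ⊆ Ici 0 → B₂ ⊆ Ici 0 →
      ∀ x₁ x₂ : ℝ, 0 ≤ x₁ → 0 ≤ x₂ → x₁ ≤ k * x₂ → ε < x₁ →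
        P {z | ω * (η₂ z) ^ 2 ∈ B₁ ∧ ω * (η₁ z) ^ 2 ≤ k * ε ∧ ω * (η₁ z) ^ 2 ∈ B₂} ≤
        P {z | ψ (ψ x₁ x₂ * (η₁ z) ^ 2) x₁ * (η₂ z) ^ 2 ∈ B₁ ∧
               ψ x₁ x₂ * (η₁ z) ^ 2 ∈ B₂}) ∧
    (∀ B₁ B₂ : Set ℝ, MeasurableSet B₁ → MeasurableSet B₂ → B₁ ⊆ Ici 0 → B₂ ⊆ Ici 0 →
      ∀ x₁ x₂ : ℝ, 0 ≤ x₁ → 0 ≤ x₂ → x₁ ≤ k * x₂ → x₁ ≤ ε →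
        P {z | (ω + α * ω * (η₁ z) ^ 2) * (η₂ z) ^ 2 ∈ B₁ ∧ k * ε < ω * (η₁ z) ^ 2 ∧
               ω * (η₁ z) ^ 2 ∈ B₂} ≤
        P {z | ψ (ψ x₁ x₂ * (η₁ z) ^ 2) x₁ * (η₂ z) ^ 2 ∈ B₁ ∧
               ψ x₁ x₂ * (η₁ z) ^ 2 ∈ B₂}) ∧
    0 < P {z | ω * (η₂ z) ^ 2 ∈ Ici (0 : ℝ) ∧ ω * (η₁ z) ^ 2 ≤ k * ε ∧
               ω * (η₁ z) ^ 2 ∈ Ici (0 : ℝ)} ∧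
    0 < P {z | (ω + α * ω * (η₁ z) ^ 2) * (η₂ z) ^ 2 ∈ Ici (0 : ℝ) ∧
               k * ε < ω * (η₁ z) ^ 2 ∧ ω * (η₁ z) ^ 2 ∈ Ici (0 : ℝ)} := by
  have hmsq : Measurable (fun z => (η₁ z) ^ 2) := hη₁.pow_const 2
  refine ⟨?_, ?_, ?_, ?_⟩
  · intro B₁ B₂ _ _ _ _ x₁ x₂ hx₁ hx₂ hC hε₁
    refine measure_mono ?_
    rintro z ⟨h1, h2, h3⟩
    have hψx : ψ x₁ x₂ = ω := by
      rw [hψ, if_neg (not_lt.2 hC), mul_zero, add_zero]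
    have h2' : ω * (η₁ z) ^ 2 ≤ k * x₁ :=
      h2.trans (le_of_lt (by exact mul_lt_mul_of_pos_left hε₁ hk))
    have hψ2 : ψ (ω * (η₁ z) ^ 2) x₁ = ω := by
      rw [hψ, if_neg (not_lt.2 h2'), mul_zero, add_zero]
    exact ⟨by rw [hψx, hψ2]; exact h1, by rw [hψx]; exact h3⟩
  · intro B₁ B₂ _ _ _ _ x₁ x₂ hx₁ hx₂ hC hε₁
    refine measure_mono ?_
    rintro z ⟨h1, h2, h3⟩
    have hψx : ψ x₁ x₂ = ω := by
      rw [hψ, if_neg (not_lt.2 hC), mul_zero, add_zero]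
    have h2' : k * x₁ < ω * (η₁ z) ^ 2 :=
      lt_of_le_of_lt (mul_le_mul_of_nonneg_left hε₁ hk.le) h2
    have hψ2 : ψ (ω * (η₁ z) ^ 2) x₁ = ω + α * ω * (η₁ z) ^ 2 := by
      rw [hψ, if_pos h2']; ring
    exact ⟨by rw [hψx, hψ2]; exact h1, by rw [hψx]; exact h3⟩
  · have hset : {z | ω * (η₂ z) ^ 2 ∈ Ici (0 : ℝ) ∧ ω * (η₁ z) ^ 2 ≤ k * ε ∧
        ω * (η₁ z) ^ 2 ∈ Ici (0 : ℝ)} = (fun z => (η₁ z) ^ 2) ⁻¹' Iic (k * ε / ω) := by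
      ext z
      simp only [mem_setOf_eq, mem_Ici, mem_preimage, mem_Iic]
      constructor
      · rintro ⟨-, h, -⟩
        exact (le_div_iff₀ hω).2 (by linarith [h, mul_comm ((η₁ z)^2) ω])
      · intro h
        refine ⟨mul_nonneg hω.le (sq_nonneg _), ?_, mul_nonneg hω.le (sq_nonneg _)⟩
        have := (le_div_iff₀ hω).1 h
        linarith [mul_comm ((η₁ z)^2) ω]
    rw [hset, ← Measure.map_apply hmsq measurableSet_Iic, hd₁]
    refine aux_pos f hf hfpos _ measurableSet_Iic ?_
    have hc : 0 < k * ε / ω := by positivity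
    have : Iic (k * ε / ω) ∩ Ici 0 = Icc 0 (k * ε / ω) := by
      ext x; simp [mem_Icc, and_comm]
    rw [this, Real.volume_Icc]
    simpa using hc
  · have hset : {z | (ω + α * ω * (η₁ z) ^ 2) * (η₂ z) ^ 2 ∈ Ici (0 : ℝ) ∧
        k * ε < ω * (η₁ z) ^ 2 ∧ ω * (η₁ z) ^ 2 ∈ Ici (0 : ℝ)} =
        (fun z => (η₁ z) ^ 2) ⁻¹' Ioi (k * ε / ω) := by
      ext z
      simp only [mem_setOf_eq, mem_Ici, mem_preimage, mem_Ioi]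
      constructor
      · rintro ⟨-, h, -⟩
        exact (div_lt_iff₀ hω).2 (by linarith [mul_comm ((η₁ z)^2) ω])
      · intro h
        have h' := (div_lt_iff₀ hω).1 h
        refine ⟨mul_nonneg ?_ (sq_nonneg _), by linarith [mul_comm ((η₁ z)^2) ω],
          mul_nonneg hω.le (sq_nonneg _)⟩
        have : 0 ≤ α * ω * (η₁ z) ^ 2 := by positivity
        linarith
    rw [hset, ← Measure.map_apply hmsq measurableSet_Ioi, hd₁]
    refine aux_pos f hf hfpos _ measurableSet_Ioi ?_
    have hc : 0 < k * ε / ω := by positivity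
    have : Ioi (k * ε / ω) ∩ Ici (0:ℝ) = Ioi (k * ε / ω) := by
      apply inter_eq_left.2
      intro x hx; exact le_of_lt (lt_trans hc hx)
    rw [this, Real.volume_Ioi]
    exact ENNReal.zero_lt_top
end

section
/- Under Assumption A with k > 0, fix ε > 0 and define, for Borel rectangles B = B₁ × B₂ ⊆ [0,∞)², μ(B) = P[ω·η₃² ∈ B₁, ω·η₁² ≤ k·ε, ω·η₂² ≤ k·ε, ω·η₂² ∈ B₂, and η₂² ≤ k·η₁²], where η₁, η₂, η₃ are i.i.d. copies of η. Then μ([0,∞)×[0,∞)) > 0, and for every x = (x₁,x₂) with x₁ ≤ k·x₂ and x₁ > ε one has both P²(x, B) ≥ μ(B) and P³(x, B) ≥ μ(B), where P²(x, B) = P[ψ(ψ(x)·η₁², x₁)·η₂² ∈ B₁ and ψ(x)·η₁² ∈ B₂] and P³(x, B) = P[ψ(ψ(ψ(x)·η₁², x₁)·η₂², ψ(x)·η₁²)·η₃² ∈ B₁ and ψ(ψ(x)·η₁², x₁)·η₂² ∈ B₂]. (This makes the set C₁ = {x₁ ≤ k·x₂, x₁ > ε} simultaneously ν₂-small and ν₃-small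 with ν₂ = ν₃ = μ, which yields aperiodicity of the chain.) -/
open MeasureTheory ProbabilityTheory Set
open scoped ENNReal

/-!
On the half-plane `x₁ ≤ k x₂` the function `ψ` is the constant `ω`. Starting in `C₁`, the first
step gives `(ω η₁², x₁)`, which stays in the half-plane as soon as `ω η₁² ≤ k ε < k x₁`; the third
step stays there too when in addition `η₂² ≤ k η₁²`. On the event defining `μ` the three-step chain
is therefore `(ω η₃², ω η₂²)`, and the two-step chain is `(ω η₂², ω η₁²)`, whose law on the
relevant event agrees with that of `(ω η₃², ω η₂²)` because `(η₁², η₂²)` and `(η₂², η₃²)` are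
both independent pairs with the same marginals. Positivity of `μ` comes from the density of
`η²` being positive on `[0, ∞)`.
-/

namespace ProbabilityTheory

variable {Ω β γ : Type*} {mΩ : MeasurableSpace Ω} {mβ : MeasurableSpace β}
  {mγ : MeasurableSpace γ} {P : Measure Ω}

theorem IndepFun.measure_inter_preimage_pos {X : Ω → β} {Y : Ω → γ} (h : IndepFun X Y P)
    {A : Set β} {B : Set γ} (hA : MeasurableSet A) (hB : MeasurableSet B)
    (hXA : 0 < P (X ⁻¹' A)) (hYB : 0 < P (Y ⁻¹' B)) : 0 < P (X ⁻¹' A ∩ Y ⁻¹' B) := by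
  rw [h.measure_inter_preimage_eq_mul _ _ hA hB]
  exact ENNReal.mul_pos hXA.ne' hYB.ne'

theorem IndepFun.measure_inter_preimage_eq_of_map_eq {X X' : Ω → β} {Y Y' : Ω → γ}
    (h : IndepFun X Y P) (h' : IndepFun X' Y' P) (hX : Measurable X) (hX' : Measurable X')
    (hY : Measurable Y) (hY' : Measurable Y') (hXX' : P.map X = P.map X')
    (hYY' : P.map Y = P.map Y') {A : Set β} {B : Set γ} (hA : MeasurableSet A)
    (hB : MeasurableSet B) : P (X ⁻¹' A ∩ Y ⁻¹' B) = P (X' ⁻¹' A ∩ Y' ⁻¹' B) := by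
  rw [h.measure_inter_preimage_eq_mul _ _ hA hB, h'.measure_inter_preimage_eq_mul _ _ hA hB,
    ← Measure.map_apply hX hA, ← Measure.map_apply hY hB, hXX', hYY',
    Measure.map_apply hX' hA, Measure.map_apply hY' hB]

end ProbabilityTheory

theorem MeasureTheory.withDensity_Icc_pos {f : ℝ → ℝ≥0∞} (hf : Measurable f) {s : Set ℝ}
    (hfs : ∀ x ∈ s, 0 < f x) {a b : ℝ} (hab : a < b) (hs : Icc a b ⊆ s) :
    0 < (volume.restrict s).withDensity f (Icc a b) := by
  have hsupp : Function.support f ∩ Icc a b = Icc a b :=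
    inter_eq_right.mpr fun x hx => (hfs x (hs hx)).ne'
  rw [withDensity_apply f measurableSet_Icc, Measure.restrict_restrict measurableSet_Icc,
    inter_eq_left.mpr hs, setLIntegral_pos_iff hf, hsupp, Real.volume_Icc]
  exact ENNReal.ofReal_pos.mpr (sub_pos.mpr hab)

theorem exists_Icc_prod_subset_small_ordered {ω k ε : ℝ} (hω : 0 < ω) (hk : 0 < k)
    (hε : 0 < ε) : ∃ a b c d : ℝ, 0 ≤ a ∧ a < b ∧ 0 ≤ c ∧ c < d ∧
      ∀ s ∈ Icc a b, ∀ t ∈ Icc c d, ω * s ≤ k * ε ∧ ω * t ≤ k * ε ∧ t ≤ k * s := by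
  set b := k * ε / ω
  have hb : 0 < b := by positivity
  refine ⟨b / 2, b, 0, min b (k * (b / 2)), by positivity, by linarith, le_rfl,
    lt_min hb (by positivity), fun s hs t ht => ?_⟩
  have hωb : ω * b = k * ε := mul_div_cancel₀ _ hω.ne'
  refine ⟨?_, ?_, ?_⟩
  · nlinarith [hs.2]
  · nlinarith [ht.2.trans (min_le_left _ _)]
  · nlinarith [ht.2.trans (min_le_right _ _), hs.1]

section Transitions

variable {Ω : Type*} {ω k ε x₁ x₂ : ℝ} {ψ : ℝ → ℝ → ℝ}

theorem subset_twoStep_event (hψ : ∀ a b, a ≤ k * b → ψ a b = ω) (hk : 0 ≤ k) (hx : x₁ ≤ k * x₂)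
    (hεx : ε ≤ x₁) (B₁ B₂ : Set ℝ) (ξ₁ ξ₂ : Ω → ℝ) :
    ξ₁ ⁻¹' ((fun t => ω * t) ⁻¹' B₂ ∩ {t | ω * t ≤ k * ε}) ∩ ξ₂ ⁻¹' ((fun t => ω * t) ⁻¹' B₁) ⊆
      {z | ψ (ψ x₁ x₂ * ξ₁ z) x₁ * ξ₂ z ∈ B₁ ∧ ψ x₁ x₂ * ξ₁ z ∈ B₂} := by
  rintro z ⟨⟨hB₂, hsmall⟩, hB₁⟩
  have hψ₁ : ψ (ω * ξ₁ z) x₁ = ω :=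
    hψ _ _ (le_trans hsmall (mul_le_mul_of_nonneg_left hεx hk))
  simp only [mem_ofPred_eq, hψ x₁ x₂ hx, hψ₁]
  exact ⟨hB₁, hB₂⟩

theorem subset_threeStep_event (hψ : ∀ a b, a ≤ k * b → ψ a b = ω) (hω : 0 ≤ ω) (hk : 0 ≤ k)
    (hx : x₁ ≤ k * x₂) (hεx : ε ≤ x₁) (B₁ B₂ : Set ℝ) (ξ₁ ξ₂ ξ₃ : Ω → ℝ) :
    {z | ω * ξ₃ z ∈ B₁ ∧ ω * ξ₁ z ≤ k * ε ∧ ω * ξ₂ z ≤ k * ε ∧ ω * ξ₂ z ∈ B₂ ∧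
        ξ₂ z ≤ k * ξ₁ z} ⊆
      {z | ψ (ψ (ψ x₁ x₂ * ξ₁ z) x₁ * ξ₂ z) (ψ x₁ x₂ * ξ₁ z) * ξ₃ z ∈ B₁ ∧
        ψ (ψ x₁ x₂ * ξ₁ z) x₁ * ξ₂ z ∈ B₂} := by
  rintro z ⟨hB₁, hsmall, -, hB₂, hord⟩
  have hψ₁ : ψ (ω * ξ₁ z) x₁ = ω :=
    hψ _ _ (le_trans hsmall (mul_le_mul_of_nonneg_left hεx hk))
  have hψ₂ : ψ (ω * ξ₂ z) (ω * ξ₁ z) = ω :=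
    hψ _ _ (by nlinarith [mul_le_mul_of_nonneg_left hord hω])
  simp only [mem_ofPred_eq, hψ x₁ x₂ hx, hψ₁, hψ₂]
  exact ⟨hB₁, hB₂⟩

end Transitions

theorem stmt9_general
    {Ω' : Type*} [MeasurableSpace Ω'] (P : Measure Ω')
    (ω α k : ℝ) (hω : 0 < ω) (hk : 0 < k)
    (ψ : ℝ → ℝ → ℝ)
    (hψ : ∀ x₁ x₂, ψ x₁ x₂ = ω + α * x₁ * (if k * x₂ < x₁ then 1 else 0))
    (η₁ η₂ η₃ : Ω' → ℝ) (hη₁ : Measurable η₁) (hη₂ : Measurable η₂) (hη₃ : Measurable η₃)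
    (hindep : iIndepFun ![η₁, η₂, η₃] P)
    (f : ℝ → ℝ≥0∞) (hf : Measurable f) (hfpos : ∀ x, 0 ≤ x → 0 < f x)
    (hd₁ : Measure.map (fun z => (η₁ z) ^ 2) P = (volume.restrict (Ici (0 : ℝ))).withDensity f)
    (hd₂ : Measure.map (fun z => (η₂ z) ^ 2) P = (volume.restrict (Ici (0 : ℝ))).withDensity f)
    (hd₃ : Measure.map (fun z => (η₃ z) ^ 2) P = (volume.restrict (Ici (0 : ℝ))).withDensity f)
    (ε : ℝ) (hε : 0 < ε) :
    0 < P {z | ω * (η₃ z) ^ 2 ∈ Ici (0 : ℝ) ∧ ω * (η₁ z) ^ 2 ≤ k * ε ∧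
               ω * (η₂ z) ^ 2 ≤ k * ε ∧ ω * (η₂ z) ^ 2 ∈ Ici (0 : ℝ) ∧
               (η₂ z) ^ 2 ≤ k * (η₁ z) ^ 2} ∧
    (∀ B₁ B₂ : Set ℝ, MeasurableSet B₁ → MeasurableSet B₂ → B₁ ⊆ Ici 0 → B₂ ⊆ Ici 0 →
      ∀ x₁ x₂ : ℝ, 0 ≤ x₁ → 0 ≤ x₂ → x₁ ≤ k * x₂ → ε < x₁ →
        P {z | ω * (η₃ z) ^ 2 ∈ B₁ ∧ ω * (η₁ z) ^ 2 ≤ k * ε ∧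
               ω * (η₂ z) ^ 2 ≤ k * ε ∧ ω * (η₂ z) ^ 2 ∈ B₂ ∧
               (η₂ z) ^ 2 ≤ k * (η₁ z) ^ 2} ≤
          P {z | ψ (ψ x₁ x₂ * (η₁ z) ^ 2) x₁ * (η₂ z) ^ 2 ∈ B₁ ∧
                 ψ x₁ x₂ * (η₁ z) ^ 2 ∈ B₂} ∧
        P {z | ω * (η₃ z) ^ 2 ∈ B₁ ∧ ω * (η₁ z) ^ 2 ≤ k * ε ∧
               ω * (η₂ z) ^ 2 ≤ k * ε ∧ ω * (η₂ z) ^ 2 ∈ B₂ ∧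
               (η₂ z) ^ 2 ≤ k * (η₁ z) ^ 2} ≤
          P {z | ψ (ψ (ψ x₁ x₂ * (η₁ z) ^ 2) x₁ * (η₂ z) ^ 2) (ψ x₁ x₂ * (η₁ z) ^ 2) *
                   (η₃ z) ^ 2 ∈ B₁ ∧
                 ψ (ψ x₁ x₂ * (η₁ z) ^ 2) x₁ * (η₂ z) ^ 2 ∈ B₂}) := by
  have hψω : ∀ a b, a ≤ k * b → ψ a b = ω := fun a b h => by
    rw [hψ, if_neg h.not_gt, mul_zero, add_zero]
  have hsq : Measurable fun t : ℝ => t ^ 2 := measurable_id.pow_const 2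
  have h₁₂ : IndepFun (fun z => η₁ z ^ 2) (fun z => η₂ z ^ 2) P :=
    (hindep.indepFun (i := 0) (j := 1) (by decide)).comp hsq hsq
  have h₂₃ : IndepFun (fun z => η₂ z ^ 2) (fun z => η₃ z ^ 2) P :=
    (hindep.indepFun (i := 1) (j := 2) (by decide)).comp hsq hsq
  refine ⟨?_, fun B₁ B₂ hB₁ hB₂ _ _ x₁ x₂ _ _ hx hεx => ⟨?_,
    measure_mono (subset_threeStep_event hψω hω.le hk.le hx hεx.le B₁ B₂ _ _ _)⟩⟩
  · obtain ⟨a, b, c, d, ha, hab, hc, hcd, hsmall⟩ :=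
      exists_Icc_prod_subset_small_ordered hω hk hε
    refine (h₁₂.measure_inter_preimage_pos (A := Icc a b) (B := Icc c d) measurableSet_Icc
      measurableSet_Icc ?_ ?_).trans_le (measure_mono ?_)
    · rw [← Measure.map_apply (hη₁.pow_const 2) measurableSet_Icc, hd₁]
      exact withDensity_Icc_pos hf hfpos hab (Icc_subset_Ici_iff hab.le |>.2 ha)
    · rw [← Measure.map_apply (hη₂.pow_const 2) measurableSet_Icc, hd₂]
      exact withDensity_Icc_pos hf hfpos hcd (Icc_subset_Ici_iff hcd.le |>.2 hc)
    · rintro z ⟨hs, ht⟩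
      obtain ⟨h₁, h₂, h₃⟩ := hsmall _ hs _ ht
      exact ⟨mem_Ici.2 (by positivity), h₁, h₂, mem_Ici.2 (by positivity), h₃⟩
  · have hmul : Measurable fun t : ℝ => ω * t := measurable_const_mul ω
    have hT₁ : MeasurableSet ((fun t => ω * t) ⁻¹' B₁) := hmul hB₁
    have hT₂ : MeasurableSet ((fun t => ω * t) ⁻¹' B₂ ∩ {t | ω * t ≤ k * ε}) :=
      (hmul hB₂).inter (measurableSet_le hmul measurable_const)
    have hshift := h₂₃.measure_inter_preimage_eq_of_map_eq h₁₂ (hη₂.pow_const 2)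
      (hη₁.pow_const 2) (hη₃.pow_const 2) (hη₂.pow_const 2) (hd₂.trans hd₁.symm)
      (hd₃.trans hd₂.symm) hT₂ hT₁
    refine (measure_mono ?_).trans (hshift.trans_le
      (measure_mono (subset_twoStep_event hψω hk.le hx hεx.le B₁ B₂ _ _)))
    rintro z ⟨hB₁, -, hsmall, hB₂, -⟩
    exact ⟨⟨hB₂, hsmall⟩, hB₁⟩

/-- Aperiodicity: under Assumption A with `k > 0` and `ε > 0`, the nontrivial measure
`μ(B₁ × B₂) = P[ω η₃² ∈ B₁, ω η₁² ≤ kε, ω η₂² ≤ kε, ω η₂² ∈ B₂, η₂² ≤ k η₁²]` minorizes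
both the two-step and the three-step transition probabilities on
`C₁ = {x₁ ≤ k x₂, x₁ > ε}`. -/
theorem stmt9
    {Ω' : Type*} [MeasurableSpace Ω'] (P : Measure Ω') [IsProbabilityMeasure P]
    (ω α k : ℝ) (hω : 0 < ω) (hα : 0 ≤ α) (hk : 0 < k)
    (ψ : ℝ → ℝ → ℝ)
    (hψ : ∀ x₁ x₂, ψ x₁ x₂ = ω + α * x₁ * (if k * x₂ < x₁ then 1 else 0))
    (η₁ η₂ η₃ : Ω' → ℝ) (hη₁ : Measurable η₁) (hη₂ : Measurable η₂) (hη₃ : Measurable η₃)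
    (hindep : iIndepFun ![η₁, η₂, η₃] P)
    (f : ℝ → ℝ≥0∞) (hf : Measurable f) (hfpos : ∀ x, 0 ≤ x → 0 < f x)
    (hd₁ : Measure.map (fun z => (η₁ z) ^ 2) P = (volume.restrict (Ici (0 : ℝ))).withDensity f)
    (hd₂ : Measure.map (fun z => (η₂ z) ^ 2) P = (volume.restrict (Ici (0 : ℝ))).withDensity f)
    (hd₃ : Measure.map (fun z => (η₃ z) ^ 2) P = (volume.restrict (Ici (0 : ℝ))).withDensity f)
    (hint₁ : Integrable η₁ P) (hint₂ : Integrable η₂ P) (hint₃ : Integrable η₃ P)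
    (hm₁ : ∫ z, η₁ z ∂P = 0) (hm₂ : ∫ z, η₂ z ∂P = 0) (hm₃ : ∫ z, η₃ z ∂P = 0)
    (hv₁ : ∫ z, (η₁ z) ^ 2 ∂P = 1) (hv₂ : ∫ z, (η₂ z) ^ 2 ∂P = 1)
    (hv₃ : ∫ z, (η₃ z) ^ 2 ∂P = 1)
    (ε : ℝ) (hε : 0 < ε) :
    0 < P {z | ω * (η₃ z) ^ 2 ∈ Ici (0 : ℝ) ∧ ω * (η₁ z) ^ 2 ≤ k * ε ∧
               ω * (η₂ z) ^ 2 ≤ k * ε ∧ ω * (η₂ z) ^ 2 ∈ Ici (0 : ℝ) ∧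
               (η₂ z) ^ 2 ≤ k * (η₁ z) ^ 2} ∧
    (∀ B₁ B₂ : Set ℝ, MeasurableSet B₁ → MeasurableSet B₂ → B₁ ⊆ Ici 0 → B₂ ⊆ Ici 0 →
      ∀ x₁ x₂ : ℝ, 0 ≤ x₁ → 0 ≤ x₂ → x₁ ≤ k * x₂ → ε < x₁ →
        P {z | ω * (η₃ z) ^ 2 ∈ B₁ ∧ ω * (η₁ z) ^ 2 ≤ k * ε ∧
               ω * (η₂ z) ^ 2 ≤ k * ε ∧ ω * (η₂ z) ^ 2 ∈ B₂ ∧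
               (η₂ z) ^ 2 ≤ k * (η₁ z) ^ 2} ≤
          P {z | ψ (ψ x₁ x₂ * (η₁ z) ^ 2) x₁ * (η₂ z) ^ 2 ∈ B₁ ∧
                 ψ x₁ x₂ * (η₁ z) ^ 2 ∈ B₂} ∧
        P {z | ω * (η₃ z) ^ 2 ∈ B₁ ∧ ω * (η₁ z) ^ 2 ≤ k * ε ∧
               ω * (η₂ z) ^ 2 ≤ k * ε ∧ ω * (η₂ z) ^ 2 ∈ B₂ ∧
               (η₂ z) ^ 2 ≤ k * (η₁ z) ^ 2} ≤
          P {z | ψ (ψ (ψ x₁ x₂ * (η₁ z) ^ 2) x₁ * (η₂ z) ^ 2) (ψ x₁ x₂ * (η₁ z) ^ 2) *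
                   (η₃ z) ^ 2 ∈ B₁ ∧
                 ψ (ψ x₁ x₂ * (η₁ z) ^ 2) x₁ * (η₂ z) ^ 2 ∈ B₂}) :=
  stmt9_general P ω α k hω hk ψ hψ η₁ η₂ η₃ hη₁ hη₂ hη₃ hindep f hf hfpos hd₁ hd₂ hd₃ ε hε
end

section
/- Under Assumption A with α > 0 and k > 0, writing μ_{2r} = E[(η²)^r] and μ*_{2r} = E[(η²)^r · 1[η² > k/α]] for r ∈ (0,1], one has lim_{r→0⁺} α^{2r}·μ_{2r}·μ*_{2r} = P[η² > k/α] < 1. In particular, there exists r ∈ (0,1] such that α^{2r}·μ_{2r}·μ*_{2r} < 1. -/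
open MeasureTheory ProbabilityTheory Set Filter
open scoped ENNReal Topology

/-! As `r → 0⁺` the moments `(η²)^r` tend to `1` almost surely, because `η² > 0` a.s. (its law
has a density); they are dominated by `max 1 η²`, so by dominated convergence the product tends to
`1 · 1 · P[η² > k/α]`. This limit is `< 1` since the density is positive on `[0, k/α]`. -/

lemma Real.rpow_le_max_one_self {x r : ℝ} (hx : 0 ≤ x) (hr₀ : 0 ≤ r) (hr₁ : r ≤ 1) :
    x ^ r ≤ max 1 x := by
  rcases le_or_gt x 1 with h | h
  · exact le_max_of_le_left (Real.rpow_le_one hx h hr₀)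
  · exact le_max_of_le_right <| by
      simpa using Real.rpow_le_rpow_of_exponent_le h.le hr₁

lemma Real.tendsto_rpow_nhdsGT_zero {x : ℝ} (hx : 0 < x) :
    Tendsto (fun r : ℝ => x ^ r) (𝓝[>] 0) (𝓝 1) := by
  simpa using (Real.continuousAt_const_rpow (b := 0) hx.ne').tendsto.mono_left nhdsWithin_le_nhds

section

variable {Ω : Type*} [MeasurableSpace Ω] {μ : Measure Ω}

lemma ae_ne_of_map_absolutelyContinuous {α : Type*} [MeasurableSpace α] {ν : Measure α}
    [NullSingletonClass ν] {X : Ω → α} (hX : AEMeasurable X μ) (h : μ.map X ≪ ν) (a : α) :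
    ∀ᵐ z ∂μ, X z ≠ a :=
  ae_of_ae_map hX (h.ae_le (ν.ae_ne a))

lemma withDensity_restrict_apply_ne_zero {f : Ω → ℝ≥0∞} (hf : Measurable f) {s t : Set Ω}
    (hs : MeasurableSet s) (hfs : ∀ x ∈ s, f x ≠ 0) (hst : μ (t ∩ s) ≠ 0) :
    (μ.restrict s).withDensity f t ≠ 0 := by
  rw [Ne, withDensity_apply_eq_zero hf, Measure.restrict_apply' hs]
  refine fun h => hst (measure_mono_null ?_ h)
  exact fun x hx => ⟨⟨hfs x hx.2, hx.1⟩, hx.2⟩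

lemma ae_pos_of_map_eq_withDensity {X : Ω → ℝ} {f : ℝ → ℝ≥0∞} (hX : AEMeasurable X μ)
    (hX₀ : ∀ z, 0 ≤ X z) (hd : μ.map X = (volume.restrict (Ici 0)).withDensity f) :
    ∀ᵐ z ∂μ, 0 < X z := by
  have hac : μ.map X ≪ volume := hd ▸
    (withDensity_absolutelyContinuous _ _).trans Measure.restrict_le_self.absolutelyContinuous
  filter_upwards [ae_ne_of_map_absolutelyContinuous hX hac 0] with z hz
  exact (hX₀ z).lt_of_ne' hz

lemma measure_le_ne_zero_of_map_eq_withDensity {X : Ω → ℝ} {f : ℝ → ℝ≥0∞} (hX : Measurable X)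
    (hf : Measurable f) (hfpos : ∀ x, 0 ≤ x → 0 < f x)
    (hd : μ.map X = (volume.restrict (Ici 0)).withDensity f) {c : ℝ} (hc : 0 < c) :
    μ {z | X z ≤ c} ≠ 0 := by
  change μ (X ⁻¹' Iic c) ≠ 0
  rw [← Measure.map_apply hX measurableSet_Iic, hd]
  refine withDensity_restrict_apply_ne_zero hf measurableSet_Ici (fun x hx => (hfpos x hx).ne') ?_
  simpa [Iic_inter_Ici, Real.volume_Icc] using hc

theorem tendsto_integral_rpow_nhdsGT_zero [IsFiniteMeasure μ] {X : Ω → ℝ}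
    (hX : AEMeasurable X μ) (hint : Integrable X μ) (hpos : ∀ᵐ z ∂μ, 0 < X z) :
    Tendsto (fun r : ℝ => ∫ z, X z ^ r ∂μ) (𝓝[>] 0) (𝓝 (μ.real univ)) := by
  have hbound : ∀ᶠ r in 𝓝[>] (0 : ℝ), ∀ᵐ z ∂μ, ‖X z ^ r‖ ≤ max 1 (X z) := by
    filter_upwards [Ioc_mem_nhdsGT (zero_lt_one' ℝ)] with r hr
    filter_upwards [hpos] with z hz
    rw [Real.norm_of_nonneg (Real.rpow_nonneg hz.le r)]
    exact Real.rpow_le_max_one_self hz.le hr.1.le hr.2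
  simpa using tendsto_integral_filter_of_dominated_convergence (fun z => max 1 (X z))
    (Eventually.of_forall fun r => (hX.pow_const r).aestronglyMeasurable) hbound
    ((integrable_const 1).sup hint)
    (hpos.mono fun z hz => Real.tendsto_rpow_nhdsGT_zero hz)

end

theorem stmt10_general
    {Ω' : Type*} [MeasurableSpace Ω'] (P : Measure Ω') [IsProbabilityMeasure P]
    (α k : ℝ) (hα : 0 < α) (hk : 0 < k)
    (η : Ω' → ℝ) (hη : Measurable η)
    (f : ℝ → ℝ≥0∞) (hf : Measurable f) (hfpos : ∀ x, 0 ≤ x → 0 < f x)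
    (hd : Measure.map (fun z => (η z) ^ 2) P = (volume.restrict (Ici (0 : ℝ))).withDensity f)
    (hv : ∫ z, (η z) ^ 2 ∂P = 1) :
    Tendsto
      (fun r : ℝ => α ^ (2 * r) * (∫ z, ((η z) ^ 2) ^ r ∂P) *
        ∫ z, ((η z) ^ 2) ^ r * (if k / α < (η z) ^ 2 then (1 : ℝ) else 0) ∂P)
      (nhdsWithin 0 (Ioi 0))
      (nhds (P {z | k / α < (η z) ^ 2}).toReal) ∧
    (P {z | k / α < (η z) ^ 2}).toReal < 1 ∧
    ∃ r : ℝ, r ∈ Ioc (0 : ℝ) 1 ∧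
      α ^ (2 * r) * (∫ z, ((η z) ^ 2) ^ r ∂P) *
        (∫ z, ((η z) ^ 2) ^ r * (if k / α < (η z) ^ 2 then (1 : ℝ) else 0) ∂P) < 1 := by
  set X : Ω' → ℝ := fun z => η z ^ 2
  set s : Set Ω' := {z | k / α < X z}
  have hXm : Measurable X := hη.pow_const 2
  have hs : MeasurableSet s := measurableSet_lt measurable_const hXm
  have hXint : Integrable X P := Integrable.of_integral_ne_zero (hv ▸ one_ne_zero)
  have hpos : ∀ᵐ z ∂P, 0 < X z :=
    ae_pos_of_map_eq_withDensity hXm.aemeasurable (fun z => sq_nonneg _) hd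
  have hmoment := tendsto_integral_rpow_nhdsGT_zero hXm.aemeasurable hXint hpos
  have htail := tendsto_integral_rpow_nhdsGT_zero hXm.aemeasurable hXint.restrict
    (ae_restrict_of_ae (s := s) hpos)
  have htail_eq (r : ℝ) :
      ∫ z, X z ^ r * (if k / α < X z then 1 else 0) ∂P = ∫ z in s, X z ^ r ∂P := by
    rw [← integral_indicator hs]
    congr 1 with z
    simp [s, indicator_apply]
  have hscale : Tendsto (fun r : ℝ => α ^ (2 * r)) (𝓝[>] 0) (𝓝 1) := by
    simpa [Real.rpow_mul hα.le] using Real.tendsto_rpow_nhdsGT_zero (pow_pos hα 2)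
  have hlim := (hscale.mul hmoment).mul htail
  simp only [probReal_univ, one_mul, measureReal_restrict_apply_univ, ← htail_eq] at hlim
  have hlt : P.real s < 1 := by
    have hcompl : P sᶜ ≠ 0 := by
      simpa [s, compl_ofPred] using measure_le_ne_zero_of_map_eq_withDensity hXm hf hfpos hd
        (div_pos hk hα)
    have : 0 < P.real sᶜ := ENNReal.toReal_pos hcompl (measure_ne_top P _)
    linarith [probReal_compl_eq_one_sub (μ := P) hs]
  obtain ⟨r, hr, hr_mem⟩ := ((hlim.eventually_lt_const hlt).and (Ioc_mem_nhdsGT one_pos)).exists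
  exact ⟨hlim, hlt, r, hr_mem, hr⟩

/-- Under Assumption A with `α > 0` and `k > 0`, writing `μ_{2r} = E[(η²)^r]` and
`μ*_{2r} = E[(η²)^r 1_{η² > k/α}]`, one has
`α^{2r} μ_{2r} μ*_{2r} → P[η² > k/α] < 1` as `r → 0⁺`; in particular
`α^{2r} μ_{2r} μ*_{2r} < 1` for some `r ∈ (0,1]`. -/
theorem stmt10
    {Ω' : Type*} [MeasurableSpace Ω'] (P : Measure Ω') [IsProbabilityMeasure P]
    (α k : ℝ) (hα : 0 < α) (hk : 0 < k)
    (η : Ω' → ℝ) (hη : Measurable η)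
    (f : ℝ → ℝ≥0∞) (hf : Measurable f) (hfpos : ∀ x, 0 ≤ x → 0 < f x)
    (hd : Measure.map (fun z => (η z) ^ 2) P = (volume.restrict (Ici (0 : ℝ))).withDensity f)
    (hint : Integrable η P) (hm : ∫ z, η z ∂P = 0) (hv : ∫ z, (η z) ^ 2 ∂P = 1) :
    Tendsto
      (fun r : ℝ => α ^ (2 * r) * (∫ z, ((η z) ^ 2) ^ r ∂P) *
        ∫ z, ((η z) ^ 2) ^ r * (if k / α < (η z) ^ 2 then (1 : ℝ) else 0) ∂P)
      (nhdsWithin 0 (Ioi 0))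
      (nhds (P {z | k / α < (η z) ^ 2}).toReal) ∧
    (P {z | k / α < (η z) ^ 2}).toReal < 1 ∧
    ∃ r : ℝ, r ∈ Ioc (0 : ℝ) 1 ∧
      α ^ (2 * r) * (∫ z, ((η z) ^ 2) ^ r ∂P) *
        (∫ z, ((η z) ^ 2) ^ r * (if k / α < (η z) ^ 2 then (1 : ℝ) else 0) ∂P) < 1 :=
  stmt10_general P α k hα hk η hη f hf hfpos hd hv
end

section
/- Under Assumption A, for every r ∈ (0,1] and every x = (x₁,x₂) ∈ [0,∞)², with η₁, η₂ i.i.d. copies of η, one has E[(η₂²)^r · ψ(ψ(x₁,x₂)·η₁², x₁)^r] ≤ μ_{2r}·ω^r + μ_{2r}·α^r·ψ(x₁,x₂)^r · E[(η²)^r · 1[η² > k·x₁/ψ(x₁,x₂)]], where μ_{2r} = E[(η²)^r]. -/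
open MeasureTheory ProbabilityTheory Set Filter
open scoped ENNReal

/-!
Since `0 < r ≤ 1`, `(s + t) ^ r ≤ s ^ r + t ^ r`; with `w = ψ(x₁, x₂)` this gives
`ψ(w u, x₁) ^ r ≤ ω ^ r + α ^ r w ^ r u ^ r 1[k x₁ / w < u]` for `u ≥ 0`.
Take `u = η₁²`, multiply by `(η₂²) ^ r` and integrate: independence factorises the
expectation of the product, and since `η₁²` and `η₂²` have the same law, `E (η₂²) ^ r = μ_{2r}`.
-/

lemma MeasureTheory.Integrable.rpow_of_nonneg {Ω : Type*} [MeasurableSpace Ω] {μ : Measure Ω}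
    [IsFiniteMeasure μ] {X : Ω → ℝ} (hX : Integrable X μ) (hX0 : ∀ z, 0 ≤ X z) {r : ℝ}
    (hr0 : 0 < r) (hr1 : r ≤ 1) : Integrable (fun z => X z ^ r) μ := by
  have hLr : MemLp X (ENNReal.ofReal r) μ :=
    (memLp_one_iff_integrable.2 hX).mono_exponent (ENNReal.ofReal_le_one.2 hr1)
  have := hLr.integrable_norm_rpow (by simpa using hr0) ENNReal.ofReal_ne_top
  simpa [ENNReal.toReal_ofReal hr0.le, Real.norm_eq_abs, abs_of_nonneg (hX0 _)] using this

lemma ProbabilityTheory.IndepFun.integral_comp_mul_comp_le {Ω : Type*} [MeasurableSpace Ω]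
    {P : Measure Ω} {X Y : Ω → ℝ} (hXY : IndepFun X Y P) (hX : Measurable X)
    (hY : Measurable Y) {φ χ χ' : ℝ → ℝ} (hφ : Measurable φ) (hχ' : Measurable χ')
    (hφ0 : ∀ z, 0 ≤ φ (Y z)) (hχ0 : ∀ z, 0 ≤ χ (X z))
    (hχχ' : ∀ z, χ (X z) ≤ χ' (X z))
    (hφY : Integrable (fun z => φ (Y z)) P) (hχ'X : Integrable (fun z => χ' (X z)) P) :
    ∫ z, φ (Y z) * χ (X z) ∂P ≤ (∫ z, φ (Y z) ∂P) * ∫ z, χ' (X z) ∂P := by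
  have hindep : IndepFun (fun z => φ (Y z)) (fun z => χ' (X z)) P := (hXY.comp hχ' hφ).symm
  calc ∫ z, φ (Y z) * χ (X z) ∂P ≤ ∫ z, φ (Y z) * χ' (X z) ∂P :=
        integral_mono_of_nonneg (ae_of_all _ fun z => mul_nonneg (hφ0 _) (hχ0 _))
          (hindep.integrable_mul hφY hχ'X)
          (ae_of_all _ fun z => mul_le_mul_of_nonneg_left (hχχ' _) (hφ0 _))
    _ = (∫ z, φ (Y z) ∂P) * ∫ z, χ' (X z) ∂P :=
        hindep.integral_mul_eq_mul_integral (hφ.comp hY).aestronglyMeasurable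
          (hχ'.comp hX).aestronglyMeasurable

lemma measurable_one_zero_ite_lt (c : ℝ) :
    Measurable fun u : ℝ => if c < u then (1 : ℝ) else 0 :=
  Measurable.ite measurableSet_Ioi measurable_const measurable_const

lemma measurable_rpow_mul_ite_lt (r c : ℝ) :
    Measurable fun u : ℝ => u ^ r * (if c < u then (1 : ℝ) else 0) :=
  (measurable_id.pow_const r).mul (measurable_one_zero_ite_lt c)

noncomputable def thresholdVol (ω α k a b : ℝ) : ℝ :=
  ω + α * a * (if k * b < a then 1 else 0)

section thresholdVol

variable {ω α k a b r : ℝ}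

lemma le_thresholdVol (hα : 0 ≤ α) (ha : 0 ≤ a) : ω ≤ thresholdVol ω α k a b := by
  unfold thresholdVol
  split_ifs <;> nlinarith

lemma thresholdVol_rpow_le (hω : 0 ≤ ω) (hα : 0 ≤ α) (ha : 0 ≤ a) (hr0 : 0 ≤ r)
    (hr1 : r ≤ 1) :
    thresholdVol ω α k a b ^ r ≤ ω ^ r + α ^ r * a ^ r * (if k * b < a then 1 else 0) := by
  unfold thresholdVol
  split_ifs
  · rw [mul_one, mul_one, ← Real.mul_rpow hα ha]
    exact Real.rpow_add_le_add_rpow hω (by positivity) hr0 hr1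
  · simp

lemma thresholdVol_mul_rpow_le (hω : 0 ≤ ω) (hα : 0 ≤ α) {w u : ℝ} (hw : 0 < w)
    (hu : 0 ≤ u) (hr0 : 0 ≤ r) (hr1 : r ≤ 1) :
    thresholdVol ω α k (w * u) b ^ r ≤
      ω ^ r + α ^ r * w ^ r * (u ^ r * (if k * b / w < u then 1 else 0)) := by
  have hiff : k * b < w * u ↔ k * b / w < u := by rw [div_lt_iff₀ hw, mul_comm u]
  calc thresholdVol ω α k (w * u) b ^ r
      ≤ ω ^ r + α ^ r * (w * u) ^ r * (if k * b < w * u then 1 else 0) :=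
        thresholdVol_rpow_le hω hα (by positivity) hr0 hr1
    _ = ω ^ r + α ^ r * w ^ r * (u ^ r * (if k * b / w < u then 1 else 0)) := by
        rw [Real.mul_rpow hw.le hu, if_congr hiff rfl rfl]; ring

lemma integral_rpow_mul_thresholdVol_rpow_le {Ω : Type*} [MeasurableSpace Ω]
    {P : Measure Ω} [IsProbabilityMeasure P] {U V : Ω → ℝ} (hUV : IndepFun U V P)
    (hU : Measurable U) (hV : Measurable V) (hU0 : ∀ z, 0 ≤ U z) (hV0 : ∀ z, 0 ≤ V z)
    (hUr : Integrable (fun z => U z ^ r) P) (hVr : Integrable (fun z => V z ^ r) P)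
    (hω : 0 ≤ ω) (hα : 0 ≤ α) {w : ℝ} (hw : 0 < w) (hr0 : 0 ≤ r) (hr1 : r ≤ 1) :
    ∫ z, V z ^ r * thresholdVol ω α k (w * U z) b ^ r ∂P ≤
      (∫ z, V z ^ r ∂P) * (ω ^ r + α ^ r * w ^ r *
        ∫ z, U z ^ r * (if k * b / w < U z then 1 else 0) ∂P) := by
  have htrunc_int : Integrable (fun z => U z ^ r * (if k * b / w < U z then 1 else 0)) P :=
    hUr.mul_bdd (c := 1) ((measurable_one_zero_ite_lt _).comp hU).aestronglyMeasurable
      (ae_of_all _ fun z => by split_ifs <;> simp)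
  have hbound := hUV.integral_comp_mul_comp_le hU hV
    (χ := fun u => thresholdVol ω α k (w * u) b ^ r)
    (χ' := fun u => ω ^ r + α ^ r * w ^ r * (u ^ r * (if k * b / w < u then 1 else 0)))
    (measurable_id.pow_const r) (measurable_const.add
      (measurable_const.mul (measurable_rpow_mul_ite_lt r _)))
    (fun z => Real.rpow_nonneg (hV0 z) r)
    (fun z => Real.rpow_nonneg (hω.trans (le_thresholdVol hα (by positivity [hU0 z]))) r)
    (fun z => thresholdVol_mul_rpow_le hω hα hw (hU0 z) hr0 hr1)
    hVr ((integrable_const _).add (htrunc_int.const_mul _))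
  rwa [integral_add (integrable_const _) (htrunc_int.const_mul _), integral_const_mul,
    integral_const, probReal_univ, one_smul] at hbound

end thresholdVol

theorem stmt11_general
    {Ω' : Type*} [MeasurableSpace Ω'] (P : Measure Ω') [IsProbabilityMeasure P]
    (ω α k : ℝ) (hω : 0 < ω) (hα : 0 ≤ α)
    (ψ : ℝ → ℝ → ℝ)
    (hψ : ∀ x₁ x₂, ψ x₁ x₂ = ω + α * x₁ * (if k * x₂ < x₁ then 1 else 0))
    (η₁ η₂ : Ω' → ℝ) (hη₁ : Measurable η₁) (hη₂ : Measurable η₂)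
    (hindep : IndepFun η₁ η₂ P)
    (f : ℝ → ℝ≥0∞)
    (hd₁ : Measure.map (fun z => (η₁ z) ^ 2) P = (volume.restrict (Ici (0 : ℝ))).withDensity f)
    (hd₂ : Measure.map (fun z => (η₂ z) ^ 2) P = (volume.restrict (Ici (0 : ℝ))).withDensity f)
    (hv₁ : ∫ z, (η₁ z) ^ 2 ∂P = 1) (hv₂ : ∫ z, (η₂ z) ^ 2 ∂P = 1)
    (r : ℝ) (hr : r ∈ Ioc (0 : ℝ) 1) :
    ∀ x₁ x₂ : ℝ, 0 ≤ x₁ → 0 ≤ x₂ →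
      ∫ z, ((η₂ z) ^ 2) ^ r * (ψ (ψ x₁ x₂ * (η₁ z) ^ 2) x₁) ^ r ∂P ≤
        (∫ z, ((η₁ z) ^ 2) ^ r ∂P) * ω ^ r +
        (∫ z, ((η₁ z) ^ 2) ^ r ∂P) * α ^ r * (ψ x₁ x₂) ^ r *
          ∫ z, ((η₁ z) ^ 2) ^ r *
            (if k * x₁ / ψ x₁ x₂ < (η₁ z) ^ 2 then (1 : ℝ) else 0) ∂P := by
  obtain ⟨hr0, hr1⟩ := hr
  intro x₁ x₂ hx₁ _
  obtain rfl : ψ = thresholdVol ω α k := funext₂ hψ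
  set w := thresholdVol ω α k x₁ x₂
  have hw : 0 < w := hω.trans_le (le_thresholdVol hα hx₁)
  have hmoment_int (η : Ω' → ℝ) (hv : ∫ z, η z ^ 2 ∂P = 1) :
      Integrable (fun z => (η z ^ 2) ^ r) P :=
    (Integrable.of_integral_ne_zero (by rw [hv]; exact one_ne_zero)).rpow_of_nonneg
      (fun z => sq_nonneg _) hr0 hr1
  have hmoment_eq : ∫ z, (η₂ z ^ 2) ^ r ∂P = ∫ z, (η₁ z ^ 2) ^ r ∂P :=
    have hsq : IdentDistrib (fun z => η₂ z ^ 2) (fun z => η₁ z ^ 2) P P :=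
      ⟨(hη₂.pow_const 2).aemeasurable, (hη₁.pow_const 2).aemeasurable,
        hd₂.trans hd₁.symm⟩
    (hsq.comp (measurable_id.pow_const r)).integral_eq
  have hbound := integral_rpow_mul_thresholdVol_rpow_le (k := k) (b := x₁)
    (U := fun z => η₁ z ^ 2) (V := fun z => η₂ z ^ 2)
    (hindep.comp (measurable_id.pow_const 2) (measurable_id.pow_const 2))
    (hη₁.pow_const 2) (hη₂.pow_const 2) (fun z => sq_nonneg _) (fun z => sq_nonneg _)
    (hmoment_int η₁ hv₁) (hmoment_int η₂ hv₂) hω.le hα hw hr0.le hr1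
  rw [hmoment_eq] at hbound
  linarith

/-- Under Assumption A, for `r ∈ (0,1]` and `x ∈ [0,∞)²`,
`E[(η₂²)^r ψ(ψ(x) η₁², x₁)^r] ≤ μ_{2r} ω^r + μ_{2r} α^r ψ(x)^r E[(η²)^r 1_{η² > k x₁/ψ(x)}]`. -/
theorem stmt11
    {Ω' : Type*} [MeasurableSpace Ω'] (P : Measure Ω') [IsProbabilityMeasure P]
    (ω α k : ℝ) (hω : 0 < ω) (hα : 0 ≤ α) (hk : 0 ≤ k)
    (ψ : ℝ → ℝ → ℝ)
    (hψ : ∀ x₁ x₂, ψ x₁ x₂ = ω + α * x₁ * (if k * x₂ < x₁ then 1 else 0))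
    (η₁ η₂ : Ω' → ℝ) (hη₁ : Measurable η₁) (hη₂ : Measurable η₂)
    (hindep : IndepFun η₁ η₂ P)
    (f : ℝ → ℝ≥0∞) (hf : Measurable f) (hfpos : ∀ x, 0 ≤ x → 0 < f x)
    (hd₁ : Measure.map (fun z => (η₁ z) ^ 2) P = (volume.restrict (Ici (0 : ℝ))).withDensity f)
    (hd₂ : Measure.map (fun z => (η₂ z) ^ 2) P = (volume.restrict (Ici (0 : ℝ))).withDensity f)
    (hint₁ : Integrable η₁ P) (hint₂ : Integrable η₂ P)
    (hm₁ : ∫ z, η₁ z ∂P = 0) (hm₂ : ∫ z, η₂ z ∂P = 0)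
    (hv₁ : ∫ z, (η₁ z) ^ 2 ∂P = 1) (hv₂ : ∫ z, (η₂ z) ^ 2 ∂P = 1)
    (r : ℝ) (hr : r ∈ Ioc (0 : ℝ) 1) :
    ∀ x₁ x₂ : ℝ, 0 ≤ x₁ → 0 ≤ x₂ →
      ∫ z, ((η₂ z) ^ 2) ^ r * (ψ (ψ x₁ x₂ * (η₁ z) ^ 2) x₁) ^ r ∂P ≤
        (∫ z, ((η₁ z) ^ 2) ^ r ∂P) * ω ^ r +
        (∫ z, ((η₁ z) ^ 2) ^ r ∂P) * α ^ r * (ψ x₁ x₂) ^ r *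
          ∫ z, ((η₁ z) ^ 2) ^ r *
            (if k * x₁ / ψ x₁ x₂ < (η₁ z) ^ 2 then (1 : ℝ) else 0) ∂P :=
  stmt11_general P ω α k hω hα ψ hψ η₁ η₂ hη₁ hη₂ hindep f hd₁ hd₂ hv₁ hv₂ r hr
end

section
/- Under Assumption A with k > 0, the Markov chain X_t = (ε_t², ε_{t-1}²) is geometrically ergodic: there is a (unique) invariant probability measure π for the kernel P(x, B) = P[(ψ(x₁,x₂)·η², x₁) ∈ B] and a constant ρ ∈ (0,1) such that for every x ∈ [0,∞)², ρ^{−t}·‖P^t(x, ·) − π‖ → 0 as t → ∞, where ‖·‖ is the total variation norm and P^t denotes the t-step transition probability. -/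
open MeasureTheory ProbabilityTheory Set Filter Topology
open scoped ENNReal

/-!
Whatever the starting point in `[0,∞)²`, with positive probability the chain first moves above
`ω` (when `η² ≥ 1`), then below the threshold but not too close to `0` (when `η²` is moderate),
where `ψ = ω`, and then stays below it (when `η²` is small). Below the threshold the next
transition only depends on `ψ = ω` and on the current `ε²`, so the four-step transition laws from
all starting points share a common part `μ₀ ≠ 0`: this is Doeblin's condition. It makes
`P^t(x, ·)` and `P^t(y, ·)` merge in total variation at the rate `(1 - μ₀(univ))^⌊t/4⌋`, so
`P^t(x₀, ·)` converges uniformly on sets to the unique invariant law.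
-/

lemma ENNReal.le_of_forall_le_add_of_tendsto {a b : ℝ≥0∞} {e : ℕ → ℝ≥0∞}
    (he : Tendsto e atTop (𝓝 0)) (h : ∀ t, a ≤ b + e t) : a ≤ b :=
  ge_of_tendsto' (by simpa using tendsto_const_nhds.add he) h

lemma ENNReal.abs_toReal_sub_le {a b c : ℝ≥0∞} (hb : b ≠ ∞) (hc : c ≠ ∞) (hab : a ≤ b + c)
    (hba : b ≤ a + c) : |a.toReal - b.toReal| ≤ c.toReal := by
  have ha : a ≠ ∞ := ne_top_of_le_ne_top (ENNReal.add_ne_top.2 ⟨hb, hc⟩) hab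
  rw [abs_sub_le_iff, sub_le_iff_le_add, sub_le_iff_le_add, add_comm c.toReal,
    add_comm c.toReal, ← ENNReal.toReal_add hb hc, ← ENNReal.toReal_add ha hc]
  exact ⟨ENNReal.toReal_mono (ENNReal.add_ne_top.2 ⟨hb, hc⟩) hab,
    ENNReal.toReal_mono (ENNReal.add_ne_top.2 ⟨ha, hc⟩) hba⟩

lemma exists_tendsto_inv_pow_mul_pow_div {r : ℝ} (hr₀ : 0 ≤ r) (hr₁ : r < 1) {m : ℕ}
    (hm : m ≠ 0) :
    ∃ ρ ∈ Ioo (0 : ℝ) 1, Tendsto (fun t : ℕ => (ρ ^ t)⁻¹ * r ^ (t / m)) atTop (𝓝 0) := by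
  -- With `s = max r ½` and `ρ^(2m) = s`, the sequence is at most `ρ^t / s`.
  set s := max r 2⁻¹
  have hs₀ : 0 < s := lt_max_of_lt_right (by norm_num)
  have hs₁ : s < 1 := max_lt hr₁ (by norm_num)
  set ρ := s ^ ((2 * m : ℕ) : ℝ)⁻¹
  have hρ₀ : 0 < ρ := Real.rpow_pos_of_pos hs₀ _
  have hρ₁ : ρ < 1 := Real.rpow_lt_one hs₀.le hs₁ (by positivity)
  have hρs : ρ ^ (2 * m) = s := Real.rpow_inv_natCast_pow hs₀.le (by positivity)
  have hlim : Tendsto (fun t : ℕ => ρ ^ t / s) atTop (𝓝 0) := by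
    simpa using (tendsto_pow_atTop_nhds_zero_of_lt_one hρ₀.le hρ₁).div_const s
  refine ⟨ρ, ⟨hρ₀, hρ₁⟩, squeeze_zero (fun t => by positivity) (fun t => ?_) hlim⟩
  have ht : t + t ≤ 2 * m * (t / m + 1) := by
    have := Nat.lt_mul_div_succ t (Nat.pos_of_ne_zero hm); nlinarith
  have hpow : s ^ (t / m) * s ≤ ρ ^ t * ρ ^ t := by
    rw [← pow_succ, ← hρs, ← pow_mul, ← pow_add]
    exact pow_le_pow_of_le_one hρ₀.le hρ₁.le ht
  rw [inv_mul_le_iff₀ (by positivity), mul_div_assoc', le_div_iff₀ hs₀]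
  calc r ^ (t / m) * s ≤ s ^ (t / m) * s := by gcongr; exact le_max_left _ _
    _ ≤ ρ ^ t * ρ ^ t := hpow

namespace MeasureTheory.Measure

variable {X Y : Type*} [MeasurableSpace X] [MeasurableSpace Y]

lemma lintegral_le_lintegral_add_mul_of_le_of_le {Q : Set X} {μ ν μ₀ : Measure X}
    [IsProbabilityMeasure μ] [IsProbabilityMeasure ν] [IsFiniteMeasure μ₀]
    (hμ : μ Qᶜ = 0) (hν : ν Qᶜ = 0) (hμ₀μ : μ₀ ≤ μ) (hμ₀ν : μ₀ ≤ ν)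
    {G : X → ℝ≥0∞} {δ : ℝ≥0∞} (hG : ∀ u ∈ Q, ∀ v ∈ Q, G u ≤ G v + δ) :
    ∫⁻ u, G u ∂μ ≤ ∫⁻ u, G u ∂ν + δ * (1 - μ₀ univ) := by
  set c := ⨅ v : Q, G v
  have hGc : ∀ u ∈ Q, G u ≤ c + δ := fun u hu => by
    rw [ENNReal.iInf_add]; exact le_iInf fun v => hG u hu v v.2
  have hcG : ∀ v ∈ Q, c ≤ G v := fun v hv => iInf_le (fun v : Q => G v) ⟨v, hv⟩
  have hrest : ∀ ρ : Measure X, IsProbabilityMeasure ρ → μ₀ ≤ ρ → ρ Qᶜ = 0 →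
      (ρ - μ₀) univ = 1 - μ₀ univ ∧ ∀ᵐ u ∂(ρ - μ₀), u ∈ Q := fun ρ _ h hρ =>
    ⟨by rw [sub_apply .univ h, measure_univ],
      (absolutelyContinuous_of_le sub_le).ae_le (ae_iff.2 hρ)⟩
  obtain ⟨hμm, hμQ⟩ := hrest μ inferInstance hμ₀μ hμ
  obtain ⟨hνm, hνQ⟩ := hrest ν inferInstance hμ₀ν hν
  calc ∫⁻ u, G u ∂μ = ∫⁻ u, G u ∂(μ - μ₀) + ∫⁻ u, G u ∂μ₀ := by
        rw [← lintegral_add_measure, sub_add_cancel_of_le hμ₀μ]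
    _ ≤ ∫⁻ _, c + δ ∂(μ - μ₀) + ∫⁻ u, G u ∂μ₀ := by
        gcongr 1; exact lintegral_mono_ae (hμQ.mono hGc)
    _ = ∫⁻ _, c ∂(ν - μ₀) + ∫⁻ u, G u ∂μ₀ + δ * (1 - μ₀ univ) := by
        simp only [lintegral_const, hμm, hνm]; ring
    _ ≤ ∫⁻ u, G u ∂(ν - μ₀) + ∫⁻ u, G u ∂μ₀ + δ * (1 - μ₀ univ) := by
        gcongr 2; exact lintegral_mono_ae (hνQ.mono hcG)
    _ = ∫⁻ u, G u ∂ν + δ * (1 - μ₀ univ) := by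
        rw [← lintegral_add_measure, sub_add_cancel_of_le hμ₀ν]

lemma sub_apply_univ_le {μ ν : Measure X} [IsFiniteMeasure μ] [IsFiniteMeasure ν] {c : ℝ≥0∞}
    (h : ∀ s, MeasurableSet s → μ s ≤ ν s + c) : (μ - ν) univ ≤ c := by
  obtain ⟨s, hs⟩ := exists_isHahnDecomposition μ ν
  have hzero : (μ - ν) s = 0 := by
    rw [← restrict_apply_univ, restrict_sub_eq_restrict_sub_restrict hs.measurableSet,
      sub_eq_zero_of_le hs.le_on, coe_zero, Pi.zero_apply]
  calc (μ - ν) univ ≤ (μ - ν) s + (μ - ν) sᶜ := measure_univ_le_add_compl s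
    _ = μ sᶜ - ν sᶜ := by
        rw [hzero, zero_add, ← restrict_apply_univ,
          restrict_sub_eq_restrict_sub_restrict hs.measurableSet.compl,
          sub_apply .univ hs.ge_on_compl, restrict_apply_univ, restrict_apply_univ]
    _ ≤ c := tsub_le_iff_left.2 (h _ hs.measurableSet.compl)

lemma bind_apply_le_add_of_forall_le_add {μ ν : Measure X} [IsFiniteMeasure μ]
    [IsFiniteMeasure ν] {c : ℝ≥0∞} (h : ∀ s, MeasurableSet s → μ s ≤ ν s + c)
    (κ : Kernel X Y) [IsMarkovKernel κ] {B : Set Y} (hB : MeasurableSet B) :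
    μ.bind κ B ≤ ν.bind κ B + c := by
  calc μ.bind κ B = ∫⁻ x, κ x B ∂μ := bind_apply hB κ.aemeasurable
    _ ≤ ∫⁻ x, κ x B ∂(μ - ν + ν) := lintegral_mono' (sub_le_iff_le_add.1 le_rfl) le_rfl
    _ ≤ ∫⁻ x, κ x B ∂ν + ∫⁻ _, 1 ∂(μ - ν) := by
        rw [lintegral_add_measure, add_comm]; gcongr with x; exact prob_le_one
    _ ≤ ν.bind κ B + c := by
        rw [bind_apply hB κ.aemeasurable, lintegral_one (μ := μ - ν)]
        gcongr
        exact sub_apply_univ_le h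

lemma exists_uniform_limit_of_uniform_cauchy {μ : ℕ → Measure X}
    [∀ t, IsProbabilityMeasure (μ t)] {e : ℕ → ℝ≥0∞} (he : Tendsto e atTop (𝓝 0))
    (h : ∀ s t, s ≤ t → ∀ B, MeasurableSet B → μ t B ≤ μ s B + e s ∧ μ s B ≤ μ t B + e s) :
    ∃ π : Measure X, IsProbabilityMeasure π ∧
      ∀ t B, MeasurableSet B → π B ≤ μ t B + e t ∧ μ t B ≤ π B + e t := by
  -- The limit is the infimum of the upper envelopes `μ s B + e s`.
  set p : Set X → ℝ≥0∞ := fun B => ⨅ s, μ s B + e s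
  have hp : ∀ t B, MeasurableSet B → p B ≤ μ t B + e t ∧ μ t B ≤ p B + e t := by
    refine fun t B hB => ⟨iInf_le (fun s => μ s B + e s) t, ?_⟩
    rw [ENNReal.iInf_add]
    refine le_iInf fun s => ?_
    rcases le_total s t with hst | hts
    · exact (h s t hst B hB).1.trans le_self_add
    · exact (h t s hts B hB).2.trans (by rw [add_right_comm]; exact le_self_add)
  have he3 : Tendsto (fun t => e t + e t + e t) atTop (𝓝 0) := by
    simpa using (he.add he).add he
  have hp_empty : p ∅ = 0 := nonpos_iff_eq_zero.1 <|
    ENNReal.le_of_forall_le_add_of_tendsto he fun t => by simpa using (hp t ∅ .empty).1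
  have hp_le_one : ∀ B, MeasurableSet B → p B ≤ 1 := fun B hB =>
    ENNReal.le_of_forall_le_add_of_tendsto he fun t =>
      (hp t B hB).1.trans (add_le_add_left prob_le_one _)
  have hp_union : ∀ {B C}, MeasurableSet B → MeasurableSet C → Disjoint B C →
      p (B ∪ C) = p B + p C := by
    intro B C hB hC hBC
    refine le_antisymm (ENNReal.le_of_forall_le_add_of_tendsto he3 fun t => ?_)
      (ENNReal.le_of_forall_le_add_of_tendsto he3 fun t => ?_)
    · calc p (B ∪ C) ≤ μ t B + μ t C + e t := by
            rw [← measure_union hBC hC]; exact (hp t _ (hB.union hC)).1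
        _ ≤ (p B + e t) + (p C + e t) + e t := by
            gcongr; exacts [(hp t B hB).2, (hp t C hC).2]
        _ = p B + p C + (e t + e t + e t) := by ring
    · calc p B + p C ≤ (μ t B + e t) + (μ t C + e t) := by
            gcongr; exacts [(hp t B hB).1, (hp t C hC).1]
        _ = μ t (B ∪ C) + e t + e t := by rw [measure_union hBC hC]; ring
        _ ≤ p (B ∪ C) + e t + e t + e t := by gcongr; exact (hp t _ (hB.union hC)).2
        _ = p (B ∪ C) + (e t + e t + e t) := by ring
  have hp_cont : ∀ ⦃s : ℕ → Set X⦄, (∀ n, MeasurableSet (s n)) → Antitone s →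
      ⋂ n, s n = ∅ → Tendsto (fun n => p (s n)) atTop (𝓝 0) := by
    intro s hs hanti hempty
    refine ENNReal.tendsto_nhds_zero.2 fun ε hε => ?_
    obtain ⟨t, ht⟩ := (he.eventually (gt_mem_nhds (ENNReal.half_pos hε.ne'))).exists
    have hμt : Tendsto (fun n => μ t (s n)) atTop (𝓝 0) := by
      simpa [hempty, Function.comp_def] using
        tendsto_measure_iInter_atTop (μ := μ t) (fun n => (hs n).nullMeasurableSet) hanti
          ⟨0, measure_ne_top _ _⟩
    filter_upwards [ENNReal.tendsto_nhds_zero.1 hμt (ε / 2) (ENNReal.half_pos hε.ne')] with n hn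
    calc p (s n) ≤ μ t (s n) + e t := (hp t _ (hs n)).1
      _ ≤ ε / 2 + ε / 2 := add_le_add hn ht.le
      _ = ε := ENNReal.add_halves ε
  have hC : IsSetRing {B : Set X | MeasurableSet B} :=
    ⟨.empty, fun _ _ hs ht => hs.union ht, fun _ _ hs ht => hs.diff ht⟩
  let m : AddContent ℝ≥0∞ {B : Set X | MeasurableSet B} :=
    hC.addContent_of_union p hp_empty hp_union
  let π := ofMeasurable (fun B _ => p B) hp_empty fun f hf hd =>
    addContent_iUnion_eq_sum_of_tendsto_zero hC m
      (fun B hB => ((hp_le_one B hB).trans_lt ENNReal.one_lt_top).ne) hp_cont hf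
      (MeasurableSet.iUnion hf) hd
  have hπ : ∀ B, MeasurableSet B → π B = p B := fun B hB => ofMeasurable_apply B hB
  refine ⟨π, ⟨?_⟩, fun t B hB => hπ B hB ▸ hp t B hB⟩
  rw [hπ _ .univ]
  exact le_antisymm (hp_le_one _ .univ) <| ENNReal.le_of_forall_le_add_of_tendsto he fun t => by
    simpa using (hp t _ .univ).2

lemma measure_preimage_Icc_pos_of_map_eq_withDensity {Ω : Type*} [MeasurableSpace Ω]
    {P : Measure Ω} {Y : Ω → ℝ} (hY : Measurable Y) {f : ℝ → ℝ≥0∞} (hf : Measurable f)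
    (hfpos : ∀ x, 0 ≤ x → 0 < f x) (hd : P.map Y = (volume.restrict (Ici 0)).withDensity f)
    {a b : ℝ} (ha : 0 ≤ a) (hab : a < b) : 0 < P (Y ⁻¹' Icc a b) := by
  have hsub : Icc a b ⊆ Ici 0 := fun x hx => ha.trans hx.1
  have hsupp : Icc a b ⊆ Function.support f := fun x hx => (hfpos x (hsub hx)).ne'
  rw [← map_apply hY measurableSet_Icc, hd, withDensity_apply _ measurableSet_Icc,
    restrict_restrict measurableSet_Icc, inter_eq_left.2 hsub, setLIntegral_pos_iff hf,
    inter_eq_right.2 hsupp, Real.volume_Icc]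
  exact ENNReal.ofReal_pos.2 (sub_pos.2 hab)

end MeasureTheory.Measure

namespace ProbabilityTheory.Kernel

variable {X : Type*} [MeasurableSpace X]

lemma pow_zero_apply (κ : Kernel X X) (x : X) : (κ ^ 0) x = Measure.dirac x :=
  id_apply x

instance isMarkovKernel_pow (κ : Kernel X X) [IsMarkovKernel κ] (n : ℕ) :
    IsMarkovKernel (κ ^ n) := by
  induction n with
  | zero => rw [pow_zero]; exact inferInstanceAs (IsMarkovKernel Kernel.id)
  | succ n ih => rw [pow_succ]; exact IsMarkovKernel.comp _ _

lemma pow_add_apply (κ : Kernel X X) (m n : ℕ) (x : X) :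
    (κ ^ (m + n)) x = ((κ ^ m) x).bind (κ ^ n) := by
  rw [add_comm, pow_add, comp_apply]

lemma eq_pow_apply_of_eq_bind {κ : Kernel X X} {Pt : ℕ → X → Measure X}
    (h₁ : ∀ x, Pt 1 x = κ x) (hsucc : ∀ t x, Pt (t + 1) x = (Pt t x).bind κ) (t : ℕ) (x : X) :
    Pt (t + 1) x = (κ ^ (t + 1)) x := by
  induction t generalizing x with
  | zero => simpa using h₁ x
  | succ t ih => rw [hsucc, ih, pow_add_apply _ (t + 1) 1, pow_one]

lemma invariant_iff {κ : Kernel X X} {π : Measure X} :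
    Invariant κ π ↔ ∀ B, MeasurableSet B → π B = ∫⁻ x, κ x B ∂π :=
  ⟨fun h B hB => by rw [← Measure.bind_apply hB κ.aemeasurable, h.def],
    fun h => Measure.ext fun B hB => by rw [Measure.bind_apply hB κ.aemeasurable, h B hB]⟩

lemma Invariant.pow {κ : Kernel X X} {π : Measure X} (h : Invariant κ π) (n : ℕ) :
    Invariant (κ ^ n) π := by
  induction n with
  | zero => exact Measure.bind_dirac
  | succ n ih => rw [pow_succ]; exact ih.comp h

/-- Doeblin's minorization `κ^m(x, ·) ≥ ε ν` on the absorbing set `Q`, with `μ₀ = ε ν`. -/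
structure DoeblinCondition (κ : Kernel X X) (Q : Set X) (m : ℕ) (μ₀ : Measure X) : Prop where
  measurableSet : MeasurableSet Q
  absorbing : ∀ x ∈ Q, κ x Qᶜ = 0
  le_pow_apply : ∀ x ∈ Q, μ₀ ≤ (κ ^ m) x
  steps_ne_zero : m ≠ 0
  ne_zero : μ₀ ≠ 0

namespace DoeblinCondition

variable {κ : Kernel X X} {Q : Set X} {m : ℕ} {μ₀ : Measure X}

lemma pow_apply_compl (h : DoeblinCondition κ Q m μ₀) (n : ℕ) {x : X} (hx : x ∈ Q) :
    (κ ^ n) x Qᶜ = 0 := by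
  induction n with
  | zero => rw [pow_zero_apply, Measure.dirac_apply' _ h.measurableSet.compl]; simpa using hx
  | succ n ih =>
    rw [pow_succ_apply_eq_lintegral _ _ _ h.measurableSet.compl,
      lintegral_eq_zero_iff (κ.measurable_coe h.measurableSet.compl)]
    filter_upwards [ae_iff.2 ih] with y hy using h.absorbing y hy

lemma one_sub_lt_one (h : DoeblinCondition κ Q m μ₀) : 1 - μ₀ univ < 1 :=
  ENNReal.sub_lt_self ENNReal.one_ne_top one_ne_zero (Measure.measure_univ_ne_zero.2 h.ne_zero)

lemma tendsto_pow_div (h : DoeblinCondition κ Q m μ₀) :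
    Tendsto (fun t => (1 - μ₀ univ) ^ (t / m)) atTop (𝓝 0) :=
  (ENNReal.tendsto_pow_atTop_nhds_zero_of_lt_one h.one_sub_lt_one).comp
    (Nat.tendsto_div_const_atTop h.steps_ne_zero)

lemma dirac_apply_compl (h : DoeblinCondition κ Q m μ₀) {x : X} (hx : x ∈ Q) :
    Measure.dirac x Qᶜ = 0 := by
  rw [Measure.dirac_apply' _ h.measurableSet.compl]; simpa using hx

variable [IsMarkovKernel κ] [IsFiniteMeasure μ₀]

lemma pow_apply_le_add (h : DoeblinCondition κ Q m μ₀) {B : Set X} (hB : MeasurableSet B)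
    (n s : ℕ) {x y : X} (hx : x ∈ Q) (hy : y ∈ Q) :
    (κ ^ (m * n + s)) x B ≤ (κ ^ (m * n + s)) y B + (1 - μ₀ univ) ^ n := by
  induction n generalizing x y with
  | zero => simpa using prob_le_one.trans le_add_self
  | succ n ih =>
    rw [show m * (n + 1) + s = m + (m * n + s) by ring, pow_add_apply_eq_lintegral _ _ _ _ hB,
      pow_add_apply_eq_lintegral _ _ _ _ hB, pow_succ]
    exact Measure.lintegral_le_lintegral_add_mul_of_le_of_le (h.pow_apply_compl m hx)
      (h.pow_apply_compl m hy) (h.le_pow_apply x hx) (h.le_pow_apply y hy)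
      fun u hu v hv => ih hu hv

lemma bind_pow_apply_le_add (h : DoeblinCondition κ Q m μ₀) {μ ν : Measure X}
    [IsProbabilityMeasure μ] [IsProbabilityMeasure ν] (hμ : μ Qᶜ = 0) (hν : ν Qᶜ = 0)
    {B : Set X} (hB : MeasurableSet B) (t : ℕ) :
    μ.bind (κ ^ t) B ≤ ν.bind (κ ^ t) B + (1 - μ₀ univ) ^ (t / m) := by
  rw [Measure.bind_apply hB (κ ^ t).aemeasurable, Measure.bind_apply hB (κ ^ t).aemeasurable]
  simpa using Measure.lintegral_le_lintegral_add_mul_of_le_of_le (μ₀ := 0) hμ hν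
    (Measure.zero_le _) (Measure.zero_le _)
    fun u hu v hv => by simpa [Nat.div_add_mod] using h.pow_apply_le_add hB (t / m) (t % m) hu hv

lemma exists_invariant (h : DoeblinCondition κ Q m μ₀) {x₀ : X} (hx₀ : x₀ ∈ Q) :
    ∃ π : Measure X, IsProbabilityMeasure π ∧ π Qᶜ = 0 ∧ Invariant κ π := by
  set e := fun t : ℕ => (1 - μ₀ univ) ^ (t / m)
  obtain ⟨π, hπ, hπμ⟩ := Measure.exists_uniform_limit_of_uniform_cauchy
    (μ := fun t => (κ ^ t) x₀) h.tendsto_pow_div fun s t hst B hB => by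
      obtain ⟨r, rfl⟩ := Nat.exists_eq_add_of_le' hst
      rw [pow_add_apply, ← Measure.dirac_bind (κ ^ s).measurable x₀]
      have hr := h.pow_apply_compl r hx₀
      exact ⟨h.bind_pow_apply_le_add hr (h.dirac_apply_compl hx₀) hB s,
        h.bind_pow_apply_le_add (h.dirac_apply_compl hx₀) hr hB s⟩
  refine ⟨π, hπ, ?_, ?_⟩
  · refine nonpos_iff_eq_zero.1 <|
      ENNReal.le_of_forall_le_add_of_tendsto h.tendsto_pow_div fun t => ?_
    simpa [h.pow_apply_compl t hx₀] using (hπμ t _ h.measurableSet.compl).1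
  have he : Tendsto (fun t => e (t + 1) + e t) atTop (𝓝 0) := by
    simpa using (h.tendsto_pow_div.comp (tendsto_add_atTop_nat 1)).add h.tendsto_pow_div
  have hstep : ∀ t, (κ ^ (t + 1)) x₀ = ((κ ^ t) x₀).bind κ := fun t => by
    rw [pow_add_apply, pow_one]
  ext B hB
  refine le_antisymm (ENNReal.le_of_forall_le_add_of_tendsto he fun t => ?_)
    (ENNReal.le_of_forall_le_add_of_tendsto he fun t => ?_)
  · calc π.bind κ B ≤ ((κ ^ t) x₀).bind κ B + e t :=
          Measure.bind_apply_le_add_of_forall_le_add (fun S hS => (hπμ t S hS).1) κ hB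
      _ ≤ π B + e (t + 1) + e t := by
          rw [← hstep]; gcongr; exact (hπμ (t + 1) B hB).2
      _ = π B + (e (t + 1) + e t) := add_assoc _ _ _
  · calc π B ≤ ((κ ^ t) x₀).bind κ B + e (t + 1) := hstep t ▸ (hπμ (t + 1) B hB).1
      _ ≤ π.bind κ B + e t + e (t + 1) := by
          gcongr
          exact Measure.bind_apply_le_add_of_forall_le_add (fun S hS => (hπμ t S hS).2) κ hB
      _ = π.bind κ B + (e (t + 1) + e t) := by ring

lemma eq_of_invariant (h : DoeblinCondition κ Q m μ₀) {π π' : Measure X}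
    [IsProbabilityMeasure π] [IsProbabilityMeasure π'] (hπQ : π Qᶜ = 0) (hπ'Q : π' Qᶜ = 0)
    (hπ : Invariant κ π) (hπ' : Invariant κ π') : π = π' := by
  ext B hB
  refine le_antisymm (ENNReal.le_of_forall_le_add_of_tendsto h.tendsto_pow_div fun t => ?_)
    (ENNReal.le_of_forall_le_add_of_tendsto h.tendsto_pow_div fun t => ?_)
  · simpa only [(hπ.pow t).def, (hπ'.pow t).def] using h.bind_pow_apply_le_add hπQ hπ'Q hB t
  · simpa only [(hπ.pow t).def, (hπ'.pow t).def] using h.bind_pow_apply_le_add hπ'Q hπQ hB t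

lemma abs_pow_apply_sub_le (h : DoeblinCondition κ Q m μ₀) {π : Measure X}
    [IsProbabilityMeasure π] (hπQ : π Qᶜ = 0) (hπ : Invariant κ π) {x : X} (hx : x ∈ Q)
    {B : Set X} (hB : MeasurableSet B) (t : ℕ) :
    |((κ ^ t) x B).toReal - (π B).toReal| ≤ ((1 - μ₀ univ) ^ (t / m)).toReal := by
  have hle := h.bind_pow_apply_le_add (h.dirac_apply_compl hx) hπQ hB t
  have hge := h.bind_pow_apply_le_add hπQ (h.dirac_apply_compl hx) hB t
  rw [Measure.dirac_bind (κ ^ t).measurable, (hπ.pow t).def] at hle hge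
  exact ENNReal.abs_toReal_sub_le (measure_ne_top _ _) (by simp) hle hge

lemma tendsto_inv_pow_mul_iSup (h : DoeblinCondition κ Q m μ₀) {π : Measure X}
    [IsProbabilityMeasure π] (hπQ : π Qᶜ = 0) (hπ : Invariant κ π) :
    ∃ ρ ∈ Ioo (0 : ℝ) 1, ∀ x ∈ Q, Tendsto (fun t : ℕ => (ρ ^ t)⁻¹ *
      ⨆ B : {B : Set X // MeasurableSet B}, |((κ ^ t) x B).toReal - (π B).toReal|)
      atTop (𝓝 0) := by
  have hr : (1 - μ₀ univ).toReal < 1 := by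
    simpa using (ENNReal.toReal_lt_toReal (by simp) ENNReal.one_ne_top).2 h.one_sub_lt_one
  obtain ⟨ρ, hρ, hlim⟩ := exists_tendsto_inv_pow_mul_pow_div ENNReal.toReal_nonneg hr
    h.steps_ne_zero
  have : Nonempty {B : Set X // MeasurableSet B} := ⟨⟨∅, .empty⟩⟩
  refine ⟨ρ, hρ, fun x hx => squeeze_zero (fun t => ?_) (fun t => ?_) hlim⟩
  · exact mul_nonneg (inv_nonneg.2 (pow_nonneg hρ.1.le t)) (Real.iSup_nonneg fun _ => abs_nonneg _)
  · refine mul_le_mul_of_nonneg_left (ciSup_le fun B => ?_) (inv_nonneg.2 (pow_nonneg hρ.1.le t))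
    simpa using h.abs_pow_apply_sub_le hπQ hπ hx B.2 t

end DoeblinCondition

end ProbabilityTheory.Kernel

noncomputable def thresholdVolatility (ω α k : ℝ) (x : ℝ × ℝ) : ℝ :=
  ω + α * x.1 * if k * x.2 < x.1 then 1 else 0

section ThresholdVolatility

variable {ω α k : ℝ} {x : ℝ × ℝ}

lemma measurable_thresholdVolatility : Measurable (thresholdVolatility ω α k) :=
  measurable_const.add <| (measurable_const.mul measurable_fst).mul <|
    Measurable.ite (measurableSet_lt (measurable_const.mul measurable_snd) measurable_fst)
      measurable_const measurable_const

lemma le_thresholdVolatility (hα : 0 ≤ α) (hx : 0 ≤ x.1) : ω ≤ thresholdVolatility ω α k x := by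
  unfold thresholdVolatility; split_ifs <;> nlinarith

lemma thresholdVolatility_le (hα : 0 ≤ α) (hx : 0 ≤ x.1) :
    thresholdVolatility ω α k x ≤ ω + α * x.1 := by
  unfold thresholdVolatility; split_ifs <;> nlinarith

lemma thresholdVolatility_of_le (hx : x.1 ≤ k * x.2) : thresholdVolatility ω α k x = ω := by
  simp [thresholdVolatility, not_lt.2 hx]

end ThresholdVolatility

section VolatilityKernel

variable {Ω : Type*} [MeasurableSpace Ω] {P : Measure Ω} [IsProbabilityMeasure P] {η : Ω → ℝ}
  {σ : ℝ × ℝ → ℝ}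

variable (P η σ) in
noncomputable def volatilityKernel : Kernel (ℝ × ℝ) (ℝ × ℝ) :=
  (Kernel.id ×ₖ Kernel.const (ℝ × ℝ) P).map fun p => (σ p.1 * η p.2 ^ 2, p.1.1)

lemma volatilityKernel_apply (hη : Measurable η) (hσ : Measurable σ) (x : ℝ × ℝ) :
    volatilityKernel P η σ x = P.map fun z => (σ x * η z ^ 2, x.1) := by
  rw [volatilityKernel, Kernel.map_apply _ (by fun_prop), Kernel.prod_apply, Kernel.id_apply,
    Kernel.const_apply, Measure.dirac_prod, Measure.map_map (by fun_prop) (by fun_prop)]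
  rfl

lemma isMarkovKernel_volatilityKernel (hη : Measurable η) (hσ : Measurable σ) :
    IsMarkovKernel (volatilityKernel P η σ) :=
  Kernel.IsMarkovKernel.map _ (by fun_prop)

lemma volatilityKernel_pow_succ_apply (hη : Measurable η) (hσ : Measurable σ) (n : ℕ)
    (x : ℝ × ℝ) {B : Set (ℝ × ℝ)} (hB : MeasurableSet B) :
    (volatilityKernel P η σ ^ (n + 1)) x B
      = ∫⁻ z, (volatilityKernel P η σ ^ n) (σ x * η z ^ 2, x.1) B ∂P := by
  have := isMarkovKernel_volatilityKernel (P := P) hη hσ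
  rw [add_comm, Kernel.pow_add_apply, pow_one, volatilityKernel_apply hη hσ,
    Measure.bind_apply hB (Kernel.aemeasurable _), lintegral_map (Kernel.measurable_coe _ hB)
    (by fun_prop)]

lemma bind_le_volatilityKernel_pow_succ_apply (hη : Measurable η) (hσ : Measurable σ)
    {E : Set Ω} (hE : MeasurableSet E) {ζ : Ω → Measure (ℝ × ℝ)} (hζ : Measurable ζ) {n : ℕ}
    {x : ℝ × ℝ} (h : ∀ z ∈ E, ζ z ≤ (volatilityKernel P η σ ^ n) (σ x * η z ^ 2, x.1)) :
    (P.restrict E).bind ζ ≤ (volatilityKernel P η σ ^ (n + 1)) x := by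
  refine Measure.le_iff.2 fun B hB => ?_
  rw [Measure.bind_apply hB hζ.aemeasurable, volatilityKernel_pow_succ_apply hη hσ n x hB]
  exact (setLIntegral_mono' hE fun z hz => h z hz B).trans (setLIntegral_le_lintegral _ _)

end VolatilityKernel

section ThresholdChain

variable {Ω : Type*} [MeasurableSpace Ω] {P : Measure Ω} [IsProbabilityMeasure P] {η : Ω → ℝ}
  {ω α k : ℝ}

local notation "κ" => volatilityKernel P η (thresholdVolatility ω α k)

lemma volatilityKernel_apply_compl (hω : 0 ≤ ω) (hα : 0 ≤ α) (hη : Measurable η) {x : ℝ × ℝ}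
    (hx : 0 ≤ x.1) : κ x (Ici 0 ×ˢ Ici 0)ᶜ = 0 := by
  rw [volatilityKernel_apply hη measurable_thresholdVolatility,
    Measure.map_apply (by fun_prop) (measurableSet_Ici.prod measurableSet_Ici).compl]
  refine measure_mono_null (fun z hz => hz ⟨?_, hx⟩) measure_empty
  exact mul_nonneg (hω.trans (le_thresholdVolatility hα hx)) (sq_nonneg _)

lemma volatilityKernel_apply_of_le (hη : Measurable η) {x y : ℝ × ℝ} (hx : x.1 ≤ k * x.2)
    (hy : y.1 ≤ k * y.2) (hxy : x.1 = y.1) : κ x = κ y := by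
  rw [volatilityKernel_apply hη measurable_thresholdVolatility,
    volatilityKernel_apply hη measurable_thresholdVolatility, thresholdVolatility_of_le hx,
    thresholdVolatility_of_le hy, hxy]

lemma smul_le_volatilityKernel_pow_succ_apply (hη : Measurable η) {E : Set Ω}
    (hE : MeasurableSet E) {ζ : Measure (ℝ × ℝ)} {n : ℕ} {x : ℝ × ℝ}
    (h : ∀ z ∈ E, ζ ≤ (κ ^ n) (thresholdVolatility ω α k x * η z ^ 2, x.1)) :
    P E • ζ ≤ (κ ^ (n + 1)) x := by
  simpa [Measure.bind_const] using
    bind_le_volatilityKernel_pow_succ_apply hη measurable_thresholdVolatility hE measurable_const h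

lemma le_volatilityKernel_pow_two_apply (hk : 0 ≤ k) (hη : Measurable η) {c : ℝ}
    {x : ℝ × ℝ} (hx : x.1 ≤ k * x.2) (hcx : c ≤ x.1) :
    (P.restrict {z | ω * η z ^ 2 ≤ k * c}).bind (fun z => κ (ω * η z ^ 2, c)) ≤ (κ ^ 2) x := by
  refine bind_le_volatilityKernel_pow_succ_apply hη measurable_thresholdVolatility
    (measurableSet_le (by fun_prop) measurable_const) ((Kernel.measurable _).comp (by fun_prop))
    fun z hz => ?_
  rw [pow_one, thresholdVolatility_of_le hx]
  -- Both `(ω η², c)` and `(ω η², x.1)` are below the threshold, where `κ` only sees `ω η²`.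
  have hz' : ω * η z ^ 2 ≤ k * c := hz
  exact (volatilityKernel_apply_of_le (x := (_, c)) (y := (_, x.1)) hη hz'
    (hz'.trans (by gcongr)) rfl).le

lemma smul_le_volatilityKernel_pow_succ_apply_of_le (hω : 0 < ω) (hα : 0 ≤ α) (hk : 0 ≤ k)
    (hη : Measurable η) {b : ℝ} (hb : 0 ≤ b) {ζ : Measure (ℝ × ℝ)} {n : ℕ}
    (hζ : ∀ z : ℝ × ℝ, z.1 ≤ k * z.2 → ω * b ≤ z.1 → ζ ≤ (κ ^ n) z) {y : ℝ × ℝ}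
    (hy : ω ≤ y.1) : P {z | η z ^ 2 ∈ Icc b (k / (1 + α))} • ζ ≤ (κ ^ (n + 1)) y := by
  have hy₀ : 0 ≤ y.1 := hω.le.trans hy
  refine smul_le_volatilityKernel_pow_succ_apply hη (measurableSet_Icc.preimage (by fun_prop))
    fun z hz => hζ _ ?_ ?_
  · calc thresholdVolatility ω α k y * η z ^ 2 ≤ (ω + α * y.1) * (k / (1 + α)) :=
          mul_le_mul (thresholdVolatility_le hα hy₀) hz.2 (sq_nonneg _) (by positivity)
      _ ≤ k * y.1 := by
          rw [← mul_div_assoc, div_le_iff₀ (by linarith)]; nlinarith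
  · exact mul_le_mul (le_thresholdVolatility hα hy₀) hz.1 hb
      (hω.le.trans (le_thresholdVolatility hα hy₀))

lemma smul_le_volatilityKernel_pow_succ_apply_of_nonneg (hω : 0 ≤ ω) (hα : 0 ≤ α)
    (hη : Measurable η) {ζ : Measure (ℝ × ℝ)} {n : ℕ} (hζ : ∀ y : ℝ × ℝ, ω ≤ y.1 → ζ ≤ (κ ^ n) y)
    {x : ℝ × ℝ} (hx : 0 ≤ x.1) : P {z | η z ^ 2 ∈ Ici 1} • ζ ≤ (κ ^ (n + 1)) x :=
  smul_le_volatilityKernel_pow_succ_apply hη (measurableSet_Ici.preimage (by fun_prop))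
    fun z hz => hζ _ <| by
      simpa using mul_le_mul (le_thresholdVolatility (k := k) hα hx) (mem_Ici.1 hz) zero_le_one
        (hω.trans (le_thresholdVolatility hα hx))

theorem doeblinCondition_volatilityKernel (hω : 0 < ω) (hα : 0 ≤ α) (hk : 0 < k)
    (hη : Measurable η) (hsupp : ∀ a b : ℝ, 0 ≤ a → a < b → 0 < P {z | η z ^ 2 ∈ Icc a b}) :
    ∃ μ₀ : Measure (ℝ × ℝ), IsFiniteMeasure μ₀ ∧
      Kernel.DoeblinCondition κ (Ici 0 ×ˢ Ici 0) 4 μ₀ := by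
  have := isMarkovKernel_volatilityKernel (P := P) hη
    (measurable_thresholdVolatility (ω := ω) (α := α) (k := k))
  set g := k / (1 + α)
  have hg : 0 < g := div_pos hk (by linarith)
  set b := g / 2
  set E₁ := {z | η z ^ 2 ∈ Ici (1 : ℝ)}
  set E₂ := {z | η z ^ 2 ∈ Icc b g}
  set E₃ := {z | ω * η z ^ 2 ≤ k * (ω * b)}
  set ξ := (P.restrict E₃).bind fun z => κ (ω * η z ^ 2, ω * b)
  have hμ₀ : ∀ x ∈ Ici (0 : ℝ) ×ˢ Ici (0 : ℝ), P E₁ • P E₂ • ξ ≤ (κ ^ 4) x := fun x hx =>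
    smul_le_volatilityKernel_pow_succ_apply_of_nonneg hω.le hα hη (fun y hy =>
      smul_le_volatilityKernel_pow_succ_apply_of_le hω hα hk.le hη (by positivity)
        (fun z hz hbz => le_volatilityKernel_pow_two_apply hk.le hη hz hbz) hy) hx.1
  have hξ : ξ univ = P E₃ := by
    have hζ : Measurable fun z => κ (ω * η z ^ 2, ω * b) :=
      (Kernel.measurable _).comp (by fun_prop)
    simp [ξ, Measure.bind_apply .univ hζ.aemeasurable]
  have hE₁ : P E₁ ≠ 0 :=
    (lt_of_lt_of_le (hsupp 1 2 zero_le_one one_lt_two) (measure_mono fun z hz => hz.1)).ne'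
  have hE₂ : P E₂ ≠ 0 := (hsupp b g (by positivity) (half_lt_self hg)).ne'
  have hE₃ : P E₃ ≠ 0 := by
    refine (lt_of_lt_of_le (hsupp 0 (k * b) le_rfl (by positivity)) (measure_mono ?_)).ne'
    intro z hz
    show ω * η z ^ 2 ≤ k * (ω * b)
    nlinarith [hz.2]
  refine ⟨P E₁ • P E₂ • ξ, isFiniteMeasure_of_le _ (hμ₀ (0, 0) (by simp)),
    measurableSet_Ici.prod measurableSet_Ici,
    fun x hx => volatilityKernel_apply_compl hω.le hα hη hx.1, hμ₀, by norm_num, ?_⟩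
  rw [← Measure.measure_univ_ne_zero]
  simp [hξ, hE₁, hE₂, hE₃]

end ThresholdChain

theorem stmt14_general
    {Ω' : Type*} [MeasurableSpace Ω'] (P : Measure Ω') [IsProbabilityMeasure P]
    (ω α k : ℝ) (hω : 0 < ω) (hα : 0 ≤ α) (hk : 0 < k)
    (ψ : ℝ → ℝ → ℝ)
    (hψ : ∀ x₁ x₂, ψ x₁ x₂ = ω + α * x₁ * (if k * x₂ < x₁ then 1 else 0))
    (η : Ω' → ℝ) (hη : Measurable η)
    (f : ℝ → ℝ≥0∞) (hf : Measurable f) (hfpos : ∀ x, 0 ≤ x → 0 < f x)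
    (hd : Measure.map (fun z => (η z) ^ 2) P = (volume.restrict (Ici (0 : ℝ))).withDensity f)
    (P1 : ℝ × ℝ → Measure (ℝ × ℝ))
    (hP1 : ∀ x, P1 x = Measure.map (fun z => (ψ x.1 x.2 * (η z) ^ 2, x.1)) P)
    (Pt : ℕ → ℝ × ℝ → Measure (ℝ × ℝ))
    (hPt1 : ∀ x, Pt 1 x = P1 x)
    (hPtsucc : ∀ t x, Pt (t + 1) x = (Pt t x).bind P1) :
    ∃ π : Measure (ℝ × ℝ), IsProbabilityMeasure π ∧
      π (Ici (0 : ℝ) ×ˢ Ici (0 : ℝ)) = 1 ∧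
      (∀ B : Set (ℝ × ℝ), MeasurableSet B → π B = ∫⁻ x, P1 x B ∂π) ∧
      (∀ π' : Measure (ℝ × ℝ), IsProbabilityMeasure π' →
        π' (Ici (0 : ℝ) ×ˢ Ici (0 : ℝ)) = 1 →
        (∀ B : Set (ℝ × ℝ), MeasurableSet B → π' B = ∫⁻ x, P1 x B ∂π') → π' = π) ∧
      ∃ ρ ∈ Ioo (0 : ℝ) 1, ∀ x ∈ Ici (0 : ℝ) ×ˢ Ici (0 : ℝ),
        Tendsto
          (fun t : ℕ => (ρ ^ t)⁻¹ *
            ⨆ B : {B : Set (ℝ × ℝ) // MeasurableSet B},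
              |(Pt t x B.1).toReal - (π B.1).toReal|)
          atTop (nhds 0) := by
  set κ := volatilityKernel P η (thresholdVolatility ω α k)
  have := isMarkovKernel_volatilityKernel (P := P) hη
    (measurable_thresholdVolatility (ω := ω) (α := α) (k := k))
  obtain rfl : P1 = κ := funext fun x => by
    rw [hP1, volatilityKernel_apply hη measurable_thresholdVolatility, hψ]; rfl
  obtain ⟨μ₀, _, h⟩ := doeblinCondition_volatilityKernel hω hα hk hη fun a b ha hab =>
    Measure.measure_preimage_Icc_pos_of_map_eq_withDensity (by fun_prop) hf hfpos hd ha hab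
  obtain ⟨π, _, hπQ, hπ⟩ := h.exists_invariant (x₀ := (0, 0)) (by simp)
  obtain ⟨ρ, hρ, hlim⟩ := h.tendsto_inv_pow_mul_iSup hπQ hπ
  refine ⟨π, inferInstance, (prob_compl_eq_zero_iff h.measurableSet).1 hπQ, Kernel.invariant_iff.1 hπ,
    fun π' _ hπ'Q hπ' => h.eq_of_invariant ((prob_compl_eq_zero_iff h.measurableSet).2 hπ'Q) hπQ
      (Kernel.invariant_iff.2 hπ') hπ, ρ, hρ, fun x hx => (hlim x hx).congr' ?_⟩
  filter_upwards [eventually_ge_atTop 1] with t ht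
  obtain ⟨t, rfl⟩ := Nat.exists_eq_add_of_le' ht
  simp only [Kernel.eq_pow_apply_of_eq_bind hPt1 hPtsucc]
  rfl

/-- Geometric ergodicity of the chain `X_t = (ε_t², ε_{t-1}²)` under Assumption A with
`k > 0`: there are a unique invariant probability measure `π` on `[0,∞)²` for the kernel
`P1 x = law of (ψ(x) η², x₁)` and a rate `ρ ∈ (0,1)` such that, for every starting point
`x ∈ [0,∞)²`, `ρ^{-t} ‖P^t(x,·) - π‖ → 0`, the total variation distance being expressed
as the supremum over measurable sets of `|P^t(x,B) - π(B)|`. -/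
theorem stmt14
    {Ω' : Type*} [MeasurableSpace Ω'] (P : Measure Ω') [IsProbabilityMeasure P]
    (ω α k : ℝ) (hω : 0 < ω) (hα : 0 ≤ α) (hk : 0 < k)
    (ψ : ℝ → ℝ → ℝ)
    (hψ : ∀ x₁ x₂, ψ x₁ x₂ = ω + α * x₁ * (if k * x₂ < x₁ then 1 else 0))
    (η : Ω' → ℝ) (hη : Measurable η)
    (f : ℝ → ℝ≥0∞) (hf : Measurable f) (hfpos : ∀ x, 0 ≤ x → 0 < f x)
    (hd : Measure.map (fun z => (η z) ^ 2) P = (volume.restrict (Ici (0 : ℝ))).withDensity f)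
    (hint : Integrable η P) (hm : ∫ z, η z ∂P = 0) (hv : ∫ z, (η z) ^ 2 ∂P = 1)
    (P1 : ℝ × ℝ → Measure (ℝ × ℝ))
    (hP1 : ∀ x, P1 x = Measure.map (fun z => (ψ x.1 x.2 * (η z) ^ 2, x.1)) P)
    (Pt : ℕ → ℝ × ℝ → Measure (ℝ × ℝ))
    (hPt1 : ∀ x, Pt 1 x = P1 x)
    (hPtsucc : ∀ t x, Pt (t + 1) x = (Pt t x).bind P1) :
    ∃ π : Measure (ℝ × ℝ), IsProbabilityMeasure π ∧
      π (Ici (0 : ℝ) ×ˢ Ici (0 : ℝ)) = 1 ∧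
      (∀ B : Set (ℝ × ℝ), MeasurableSet B → π B = ∫⁻ x, P1 x B ∂π) ∧
      (∀ π' : Measure (ℝ × ℝ), IsProbabilityMeasure π' →
        π' (Ici (0 : ℝ) ×ˢ Ici (0 : ℝ)) = 1 →
        (∀ B : Set (ℝ × ℝ), MeasurableSet B → π' B = ∫⁻ x, P1 x B ∂π') → π' = π) ∧
      ∃ ρ ∈ Ioo (0 : ℝ) 1, ∀ x ∈ Ici (0 : ℝ) ×ˢ Ici (0 : ℝ),
        Tendsto
          (fun t : ℕ => (ρ ^ t)⁻¹ *
            ⨆ B : {B : Set (ℝ × ℝ) // MeasurableSet B},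
              |(Pt t x B.1).toReal - (π B.1).toReal|)
          atTop (nhds 0) :=
  stmt14_general P ω α k hω hα hk ψ hψ η hη f hf hfpos hd P1 hP1 Pt hPt1 hPtsucc
end

section
/- Suppose 0 ≤ k ≤ 1, p is a positive integer, and (ε_t)_{t∈ℤ} is a strictly stationary solution of the model ε_t = σ_t η_t, σ_t² = ω + α ε_{t-1}² 1[ε_{t-1}² > k ε_{t-2}²] whose 2p-th moment c = E(ε_t^{2p}) is finite (and, by stationarity, the same for all t), where (η_t) is i.i.d. satisfying Assumption A with μ_{2p} = E[(η_t²)^p] < ∞ and η_t is independent of {ε_s : s < t}. Then necessarily μ_{2p}·α^p·(1 − k^p) < 1, and c ≥ μ_{2p}·ω^p / (1 − μ_{2p}·α^p·(1 − k^p)). -/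
/-!
Since `η_0` is independent of the past, `ε_0^{2p} = (σ_0²)^p (η_0²)^p` factorises in expectation:
`c = μ_{2p} E(σ_0²)^p`. Pointwise, `(σ_0²)^p ≥ ω^p + α^p (ε_{-1}^{2p} - k^p ε_{-2}^{2p})`: if the
threshold is crossed this is superadditivity of `x ↦ x^p`, otherwise `ε_{-1}² ≤ k ε_{-2}²`. As both
lags have `2p`-th moment `c`, this gives `c ≥ μ_{2p} (ω^p + α^p (1 - k^p) c)`; since `ω^p > 0`, the
factor `1 - μ_{2p} α^p (1 - k^p)` must be positive, and the bound follows by dividing by it.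
-/

open MeasureTheory ProbabilityTheory Set Filter
open scoped ENNReal

/-- The squared volatility `σ_t²` of the model, as a function of `x = ε_{t-1}` and `y = ε_{t-2}`. -/
noncomputable def thresholdVolSq (ω α k x y : ℝ) : ℝ :=
  ω + α * x ^ 2 * (if k * y ^ 2 < x ^ 2 then 1 else 0)

section thresholdVolSq

variable {ω α k : ℝ}

lemma measurable_thresholdVolSq (ω α k : ℝ) :
    Measurable (Function.uncurry (thresholdVolSq ω α k)) := by
  unfold thresholdVolSq Function.uncurry
  have hthreshold : MeasurableSet {q : ℝ × ℝ | k * q.2 ^ 2 < q.1 ^ 2} :=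
    measurableSet_lt (by fun_prop) (by fun_prop)
  exact measurable_const.add ((by fun_prop : Measurable fun q : ℝ × ℝ => α * q.1 ^ 2).mul
    (measurable_const.ite hthreshold measurable_const))

lemma thresholdVolSq_nonneg (hω : 0 ≤ ω) (hα : 0 ≤ α) (x y : ℝ) :
    0 ≤ thresholdVolSq ω α k x y := by
  unfold thresholdVolSq; split_ifs <;> positivity

lemma thresholdVolSq_le (hα : 0 ≤ α) (x y : ℝ) : thresholdVolSq ω α k x y ≤ ω + α * x ^ 2 := by
  unfold thresholdVolSq; split_ifs <;> nlinarith [sq_nonneg x]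

lemma add_sub_le_thresholdVolSq_pow (hω : 0 ≤ ω) (hα : 0 ≤ α) (hk : 0 ≤ k) {p : ℕ} (hp : p ≠ 0)
    (x y : ℝ) :
    ω ^ p + α ^ p * (x ^ (2 * p) - k ^ p * y ^ (2 * p)) ≤ thresholdVolSq ω α k x y ^ p := by
  have hy : 0 ≤ y ^ (2 * p) := by rw [pow_mul]; positivity
  unfold thresholdVolSq
  split_ifs with h
  · calc ω ^ p + α ^ p * (x ^ (2 * p) - k ^ p * y ^ (2 * p))
        ≤ ω ^ p + (α * x ^ 2) ^ p := by
          rw [mul_pow, pow_mul]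
          have : 0 ≤ α ^ p * (k ^ p * y ^ (2 * p)) := by positivity
          nlinarith
      _ ≤ (ω + α * x ^ 2) ^ p := pow_add_pow_le hω (by positivity) hp
      _ = (ω + α * x ^ 2 * 1) ^ p := by rw [mul_one]
  · have hxy : x ^ (2 * p) ≤ k ^ p * y ^ (2 * p) := by
      rw [pow_mul, pow_mul, ← mul_pow]
      exact pow_le_pow_left₀ (sq_nonneg x) (not_lt.mp h) p
    have : α ^ p * (x ^ (2 * p) - k ^ p * y ^ (2 * p)) ≤ 0 :=
      mul_nonpos_of_nonneg_of_nonpos (by positivity) (by linarith)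
    simpa using this

end thresholdVolSq

lemma lt_one_and_div_le_of_mul_le {μ a b d c : ℝ} (hμ : 0 ≤ μ) (ha : 0 < a) (hc : 0 ≤ c)
    (h : (a + b * d * c) * μ ≤ c) : μ * b * d < 1 ∧ μ * a / (1 - μ * b * d) ≤ c := by
  rcases hμ.eq_or_lt with rfl | hμ
  · simpa using hc
  have hpos : 0 < 1 - μ * b * d := by
    by_contra! hle
    nlinarith [mul_pos hμ ha]
  refine ⟨by linarith, ?_⟩
  rw [div_le_iff₀ hpos]
  linarith

section Probability

variable {Ω : Type*} [MeasurableSpace Ω] {P : Measure Ω}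

lemma indepFun_prodMk_of_indep_iSup {ι β γ : Type*} [mβ : MeasurableSpace β]
    [mγ : MeasurableSpace γ] {X : Ω → β} {Y : ι → Ω → γ}
    (h : Indep (MeasurableSpace.comap X mβ) (⨆ i, MeasurableSpace.comap (Y i) mγ) P) (i j : ι) :
    IndepFun X (fun z => (Y i z, Y j z)) P := by
  rw [IndepFun_iff_Indep]
  refine indep_of_indep_of_le_right h (Measurable.comap_le ?_)
  exact (Measurable.of_comap_le (le_iSup (fun i => MeasurableSpace.comap (Y i) mγ) i)).prodMk
    (Measurable.of_comap_le (le_iSup (fun i => MeasurableSpace.comap (Y i) mγ) j))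

lemma integrable_pow_of_le_const_add_mul_sq [IsFiniteMeasure P] {a b : ℝ} (ha : 0 ≤ a)
    (hb : 0 ≤ b) {V X : Ω → ℝ} {p : ℕ} (hV : AEStronglyMeasurable V P) (hV0 : ∀ z, 0 ≤ V z)
    (hVX : ∀ z, V z ≤ a + b * X z ^ 2) (hX : Integrable (fun z => X z ^ (2 * p)) P) :
    Integrable (fun z => V z ^ p) P := by
  have hbound : Integrable (fun z => 2 ^ (p - 1) * (a ^ p + b ^ p * X z ^ (2 * p))) P :=
    ((integrable_const _).add (hX.const_mul _)).const_mul _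
  refine hbound.mono' (hV.pow p) (ae_of_all _ fun z => ?_)
  rw [Real.norm_eq_abs, abs_of_nonneg (pow_nonneg (hV0 z) p), pow_mul, ← mul_pow]
  exact (pow_le_pow_left₀ (hV0 z) (hVX z) p).trans (add_pow_le ha (by positivity) p)

lemma add_mul_le_integral_thresholdVolSq_pow {ω α k : ℝ} (hω : 0 ≤ ω) (hα : 0 ≤ α) (hk : 0 ≤ k)
    [IsProbabilityMeasure P] {p : ℕ} (hp : p ≠ 0) {X Y : Ω → ℝ} {c : ℝ}
    (hX : Integrable (fun z => X z ^ (2 * p)) P) (hY : Integrable (fun z => Y z ^ (2 * p)) P)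
    (hXc : ∫ z, X z ^ (2 * p) ∂P = c) (hYc : ∫ z, Y z ^ (2 * p) ∂P = c)
    (hV : Integrable (fun z => thresholdVolSq ω α k (X z) (Y z) ^ p) P) :
    ω ^ p + α ^ p * (1 - k ^ p) * c ≤ ∫ z, thresholdVolSq ω α k (X z) (Y z) ^ p ∂P := by
  have hdiff : Integrable (fun z => X z ^ (2 * p) - k ^ p * Y z ^ (2 * p)) P :=
    hX.sub (hY.const_mul _)
  have hlow : Integrable
      (fun z => ω ^ p + α ^ p * (X z ^ (2 * p) - k ^ p * Y z ^ (2 * p))) P :=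
    (integrable_const _).add (hdiff.const_mul _)
  calc ω ^ p + α ^ p * (1 - k ^ p) * c
      = ∫ z, ω ^ p + α ^ p * (X z ^ (2 * p) - k ^ p * Y z ^ (2 * p)) ∂P := by
        rw [integral_add (integrable_const _) (hdiff.const_mul _), integral_const_mul,
          integral_sub hX (hY.const_mul _), integral_const_mul, hXc, hYc, integral_const,
          probReal_univ, one_smul]
        ring
    _ ≤ _ := integral_mono hlow hV fun z => add_sub_le_thresholdVolSq_pow hω hα hk hp _ _

end Probability

theorem stmt19_general
    {Ω' : Type*} [MeasurableSpace Ω'] (P : Measure Ω') [IsProbabilityMeasure P]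
    (ω α k : ℝ) (hω : 0 < ω) (hα : 0 ≤ α) (hk0 : 0 ≤ k)
    (p : ℕ) (hp : 1 ≤ p)
    (η ε σ : ℤ → Ω' → ℝ)
    (hηmeas : ∀ t, Measurable (η t)) (hεmeas : ∀ t, Measurable (ε t))
    (hmodel : ∀ t z, ε t z = σ t z * η t z)
    (hvol : ∀ t z, (σ t z) ^ 2 =
      ω + α * (ε (t - 1) z) ^ 2 *
        (if k * (ε (t - 2) z) ^ 2 < (ε (t - 1) z) ^ 2 then 1 else 0))
    (hpast : ∀ t : ℤ, Indep (MeasurableSpace.comap (η t) inferInstance)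
      (⨆ s : {s : ℤ // s < t}, MeasurableSpace.comap (ε s.1) inferInstance) P)
    (c : ℝ) (hcint : ∀ t, Integrable (fun z => (ε t z) ^ (2 * p)) P)
    (hc : ∀ t, ∫ z, (ε t z) ^ (2 * p) ∂P = c) :
    (∫ z, ((η 0 z) ^ 2) ^ p ∂P) * α ^ p * (1 - k ^ p) < 1 ∧
      (∫ z, ((η 0 z) ^ 2) ^ p ∂P) * ω ^ p /
        (1 - (∫ z, ((η 0 z) ^ 2) ^ p ∂P) * α ^ p * (1 - k ^ p)) ≤ c := by
  have hp0 : p ≠ 0 := by omega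
  have hσ : ∀ z, σ 0 z ^ 2 = thresholdVolSq ω α k (ε (0 - 1) z) (ε (0 - 2) z) := hvol 0
  have hσmeas : Measurable fun z => σ 0 z ^ 2 := by
    simp only [hσ]
    exact (measurable_thresholdVolSq ω α k).comp ((hεmeas _).prodMk (hεmeas _))
  have hVint : Integrable (fun z => (σ 0 z ^ 2) ^ p) P :=
    integrable_pow_of_le_const_add_mul_sq hω.le hα hσmeas.aestronglyMeasurable
      (fun z => hσ z ▸ thresholdVolSq_nonneg hω.le hα _ _)
      (fun z => hσ z ▸ thresholdVolSq_le hα _ _) (hcint (0 - 1))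
  have hindep : IndepFun (fun z => (σ 0 z ^ 2) ^ p) (fun z => (η 0 z ^ 2) ^ p) P := by
    have h := (indepFun_prodMk_of_indep_iSup (hpast 0) ⟨0 - 1, by norm_num⟩
      ⟨0 - 2, by norm_num⟩).symm.comp ((measurable_thresholdVolSq ω α k).pow_const p)
        ((measurable_id.pow_const 2).pow_const p)
    simpa only [Function.comp_def, Function.uncurry_apply_pair, id, ← hσ] using h
  have hfactor : c = (∫ z, (σ 0 z ^ 2) ^ p ∂P) * ∫ z, (η 0 z ^ 2) ^ p ∂P := by
    rw [← hc 0, ← hindep.integral_fun_mul_eq_mul_integral (hσmeas.pow_const p).aestronglyMeasurable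
      (((hηmeas 0).pow_const 2).pow_const p).aestronglyMeasurable]
    simp only [hmodel, pow_mul, mul_pow]
  have hlower : ω ^ p + α ^ p * (1 - k ^ p) * c ≤ ∫ z, (σ 0 z ^ 2) ^ p ∂P := by
    simp only [hσ] at hVint ⊢
    exact add_mul_le_integral_thresholdVolSq_pow hω.le hα hk0 hp0 (hcint _) (hcint _) (hc _)
      (hc _) hVint
  have hc0 : 0 ≤ c := hc 0 ▸ integral_nonneg fun z => by rw [pow_mul]; positivity
  refine lt_one_and_div_le_of_mul_le (integral_nonneg fun z => by positivity) (pow_pos hω p) hc0 ?_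
  calc (ω ^ p + α ^ p * (1 - k ^ p) * c) * ∫ z, (η 0 z ^ 2) ^ p ∂P
      ≤ (∫ z, (σ 0 z ^ 2) ^ p ∂P) * ∫ z, (η 0 z ^ 2) ^ p ∂P :=
        mul_le_mul_of_nonneg_right hlower (integral_nonneg fun z => by positivity)
    _ = c := hfactor.symm

/-- Necessary condition for the existence of the `2p`-th moment when `0 ≤ k ≤ 1`:
if `(ε_t)_{t ∈ ℤ}` is a strictly stationary solution of
`ε_t = σ_t η_t`, `σ_t² = ω + α ε_{t-1}² 1_{ε_{t-1}² > k ε_{t-2}²}` with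
`c = E ε_t^{2p} < ∞`, then `μ_{2p} α^p (1 - k^p) < 1` and
`c ≥ μ_{2p} ω^p / (1 - μ_{2p} α^p (1 - k^p))`. -/
theorem stmt19
    {Ω' : Type*} [MeasurableSpace Ω'] (P : Measure Ω') [IsProbabilityMeasure P]
    (ω α k : ℝ) (hω : 0 < ω) (hα : 0 ≤ α) (hk0 : 0 ≤ k) (hk1 : k ≤ 1)
    (p : ℕ) (hp : 1 ≤ p)
    (η ε σ : ℤ → Ω' → ℝ)
    (hηmeas : ∀ t, Measurable (η t)) (hεmeas : ∀ t, Measurable (ε t))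
    (hσmeas : ∀ t, Measurable (σ t))
    (hiid : iIndepFun η P)
    (f : ℝ → ℝ≥0∞) (hf : Measurable f) (hfpos : ∀ x, 0 ≤ x → 0 < f x)
    (hd : ∀ t, Measure.map (fun z => (η t z) ^ 2) P =
      (volume.restrict (Ici (0 : ℝ))).withDensity f)
    (hint : ∀ t, Integrable (η t) P)
    (hmean : ∀ t, ∫ z, η t z ∂P = 0) (hvar : ∀ t, ∫ z, (η t z) ^ 2 ∂P = 1)
    (hμ2p : Integrable (fun z => ((η 0 z) ^ 2) ^ p) P)
    (hmodel : ∀ t z, ε t z = σ t z * η t z)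
    (hσpos : ∀ t z, 0 ≤ σ t z)
    (hvol : ∀ t z, (σ t z) ^ 2 =
      ω + α * (ε (t - 1) z) ^ 2 *
        (if k * (ε (t - 2) z) ^ 2 < (ε (t - 1) z) ^ 2 then 1 else 0))
    (hpast : ∀ t : ℤ, Indep (MeasurableSpace.comap (η t) inferInstance)
      (⨆ s : {s : ℤ // s < t}, MeasurableSpace.comap (ε s.1) inferInstance) P)
    (hstat : ∀ (n : ℕ) (t s : ℤ),
      Measure.map (fun z => fun i : Fin n => ε (t + i) z) P =
      Measure.map (fun z => fun i : Fin n => ε (s + i) z) P)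
    (c : ℝ) (hcint : ∀ t, Integrable (fun z => (ε t z) ^ (2 * p)) P)
    (hc : ∀ t, ∫ z, (ε t z) ^ (2 * p) ∂P = c) :
    (∫ z, ((η 0 z) ^ 2) ^ p ∂P) * α ^ p * (1 - k ^ p) < 1 ∧
      (∫ z, ((η 0 z) ^ 2) ^ p ∂P) * ω ^ p /
        (1 - (∫ z, ((η 0 z) ^ 2) ^ p ∂P) * α ^ p * (1 - k ^ p)) ≤ c :=
  stmt19_general P ω α k hω hα hk0 p hp η ε σ hηmeas hεmeas hmodel hvol hpast c hcint hc
end
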